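/- arXiv:2406.20032 — 14 statements merged into one kernel-verified Lean document; each statement's English description precedes it below -/
import Mathlib

section
/- Let K_n (n ≥ 2) be the complete graph on vertices v_1, ..., v_n, and let g be a proper vertex coloring of K_n by positive integers (so the values g(v_1), ..., g(v_n) are pairwise distinct). Then g is a graceful coloring of K_n (i.e., the induced edge coloring g*(ab) = |g(a) - g(b)| assigns distinct values to any two edges sharing a vertex) if and only if the set {g(v_i) : 1 ≤ i ≤ n} is 3-AP-free. -/
/-- The induced edge coloring `g*(ab) = |g a - g b|` is proper: any two edges sharing a
vertex receive distinct values. -/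
def GracefulEdgeProper {V : Type*} (G : SimpleGraph V) (g : V → ℕ) : Prop :=
  ∀ a b c : V, G.Adj a b → G.Adj a c → b ≠ c →
    Nat.dist (g a) (g b) ≠ Nat.dist (g a) (g c)

/-- A graceful coloring: a proper vertex coloring by positive integers whose induced
edge coloring is proper. -/
def IsGracefulColoring {V : Type*} (G : SimpleGraph V) (g : V → ℕ) : Prop :=
  (∀ v, 1 ≤ g v) ∧ (∀ a b : V, G.Adj a b → g a ≠ g b) ∧ GracefulEdgeProper G g

/-- A graceful `l`-coloring: a proper vertex coloring with colors in `{1, …, l}` whose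
induced edge coloring is proper. -/
def IsGracefulLColoring {V : Type*} (G : SimpleGraph V) (l : ℕ) (g : V → ℕ) : Prop :=
  (∀ v, g v ∈ Finset.Icc 1 l) ∧ (∀ a b : V, G.Adj a b → g a ≠ g b) ∧ GracefulEdgeProper G g

/-- The graceful chromatic number: the least `l ≥ 2` admitting a graceful `l`-coloring. -/
noncomputable def gracefulChromaticNumber {V : Type*} (G : SimpleGraph V) : ℕ :=
  sInf {l | 2 ≤ l ∧ ∃ g : V → ℕ, IsGracefulLColoring G l g}

/-- A finite set of naturals is 3-AP-free: no three distinct elements `a, b, c`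
with `b - a = c - b`. -/
def ThreeAPFreeSet (S : Finset ℕ) : Prop :=
  ∀ a ∈ S, ∀ b ∈ S, ∀ c ∈ S, a ≠ b → b ≠ c → a ≠ c → (b : ℤ) - (a : ℤ) ≠ (c : ℤ) - (b : ℤ)

theorem graceful_iff_threeAPFree_Kn (n : ℕ) (hn : 2 ≤ n) (g : Fin n → ℕ)
    (hpos : ∀ v, 1 ≤ g v)
    (hproper : ∀ a b : Fin n, (⊤ : SimpleGraph (Fin n)).Adj a b → g a ≠ g b) :
    IsGracefulColoring (⊤ : SimpleGraph (Fin n)) g ↔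
      ThreeAPFreeSet (Finset.univ.image g) := by
  have hdist : ∀ x y : ℕ, Nat.dist x y = x - y + (y - x) := fun x y => rfl
  constructor
  · rintro ⟨-, -, hedge⟩
    intro x hx y hy z hz hxy hyz hxz hap
    simp only [Finset.mem_image, Finset.mem_univ, true_and] at hx hy hz
    obtain ⟨a, ha⟩ := hx
    obtain ⟨b, hb⟩ := hy
    obtain ⟨c, hc⟩ := hz
    subst ha hb hc
    apply hedge b a c
    · simp only [SimpleGraph.top_adj]
      rintro rfl; exact hxy rfl
    · simp only [SimpleGraph.top_adj]
      rintro rfl; exact hyz rfl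
    · rintro rfl; exact hxz rfl
    rw [hdist, hdist]
    omega
  · intro hAP
    refine ⟨hpos, hproper, ?_⟩
    intro a b c hab hac hbc heq
    have h1 : g a ≠ g b := hproper a b hab
    have h2 : g a ≠ g c := hproper a c hac
    have h3 : g b ≠ g c := hproper b c (by simpa using hbc)
    have hgb : g b ∈ Finset.univ.image g := Finset.mem_image_of_mem g (Finset.mem_univ b)
    have hga : g a ∈ Finset.univ.image g := Finset.mem_image_of_mem g (Finset.mem_univ a)
    have hgc : g c ∈ Finset.univ.image g := Finset.mem_image_of_mem g (Finset.mem_univ c)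
    have := hAP (g b) hgb (g a) hga (g c) hgc h1.symm h2 h3
    rw [hdist, hdist] at heq
    omega
end

section
/- For every n ≥ 2, the graceful chromatic number of the complete graph K_n equals the least positive integer N such that the interval {1, 2, ..., N} contains a 3-AP-free subset of size n. -/
lemma natDist_cast (x y : ℕ) : (Nat.dist x y : ℤ) = |(x : ℤ) - (y : ℤ)| := by
  rcases le_total x y with h | h
  · rw [abs_of_nonpos (by omega), Nat.dist]; omega
  · rw [abs_of_nonneg (by omega), Nat.dist]; omega

theorem gracefulChromaticNumber_complete_eq_least_threeAPFree (n : ℕ) (hn : 2 ≤ n) :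
    gracefulChromaticNumber (⊤ : SimpleGraph (Fin n)) =
      sInf {N : ℕ | 1 ≤ N ∧ ∃ S : Finset ℕ,
        S ⊆ Finset.Icc 1 N ∧ S.card = n ∧ ThreeAPFreeSet S} := by
  unfold gracefulChromaticNumber
  congr 1
  ext l
  simp only [Set.mem_setOf_eq]
  constructor
  · rintro ⟨hl, g, hmem, hproper, hedge⟩
    have hinj : Function.Injective g := by
      intro a b hab
      by_contra hne
      exact hproper a b (by simp [hne]) hab
    refine ⟨le_trans one_le_two hl, Finset.univ.image g, ?_, ?_, ?_⟩
    · intro x hx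
      obtain ⟨v, _, rfl⟩ := Finset.mem_image.mp hx
      exact hmem v
    · rw [Finset.card_image_of_injective _ hinj, Finset.card_univ, Fintype.card_fin]
    · intro a ha b hb c hc hab hbc hac heq
      obtain ⟨u, _, rfl⟩ := Finset.mem_image.mp ha
      obtain ⟨v, _, rfl⟩ := Finset.mem_image.mp hb
      obtain ⟨w, _, rfl⟩ := Finset.mem_image.mp hc
      have huv : v ≠ u := fun h => hab (by rw [h])
      have hvw : v ≠ w := fun h => hbc (by rw [h])
      have huw : u ≠ w := fun h => hac (by rw [h])
      have := hedge v u w (by simp [huv]) (by simp [hvw]) huw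
      apply this
      have : (Nat.dist (g v) (g u) : ℤ) = (Nat.dist (g v) (g w) : ℤ) := by
        rw [natDist_cast, natDist_cast,
          show ((g v : ℕ) : ℤ) - (g u : ℕ) = ((g w : ℕ) : ℤ) - (g v : ℕ) from heq,
          abs_sub_comm]
      exact_mod_cast this
  · rintro ⟨hN, S, hS, hcard, hap⟩
    have hl2 : 2 ≤ l := by
      have : n ≤ l := by
        calc n = S.card := hcard.symm
        _ ≤ (Finset.Icc 1 l).card := Finset.card_le_card hS
        _ = l := by simp
      omega
    refine ⟨hl2, ?_⟩
    have e : Fin n ≃ {x // x ∈ S} := by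
      rw [← hcard]; exact S.equivFin.symm
    refine ⟨fun v => (e v : ℕ), fun v => hS (e v).2, ?_, ?_⟩
    · intro a b hab h
      exact (SimpleGraph.top_adj a b).mp hab (e.injective (Subtype.ext h))
    · intro a b c _ _ hbc heq
      have hab : (e a : ℕ) ≠ (e b : ℕ) := fun h =>
        ((SimpleGraph.top_adj a b).mp ‹_›) (e.injective (Subtype.ext h))
      have hac : (e a : ℕ) ≠ (e c : ℕ) := fun h =>
        ((SimpleGraph.top_adj a c).mp ‹_›) (e.injective (Subtype.ext h))
      have hbc' : (e b : ℕ) ≠ (e c : ℕ) := fun h => hbc (e.injective (Subtype.ext h))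
      have heqz : |((e a : ℕ) : ℤ) - ((e b : ℕ) : ℤ)| = |((e a : ℕ) : ℤ) - ((e c : ℕ) : ℤ)| := by
        rw [← natDist_cast, ← natDist_cast]; exact_mod_cast heq
      rcases abs_eq_abs.mp heqz with h | h
      · apply hbc'; omega
      · exact hap _ (e b).2 _ (e a).2 _ (e c).2 (Ne.symm hab) hac hbc' (by linarith)
end

section
/- For a simple connected graph G with at least one edge, the chromatic number of G equals the graceful chromatic number of G if and only if G is isomorphic to the complete graph K_2. -/
open SimpleGraph

/-- Recoloring lemma: if every vertex of color 2 misses some color from the palette,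
then `G` is `(k-1)`-colorable. -/
lemma colorable_of_recolor {V : Type*} (G : SimpleGraph V) (k : ℕ) (hk : 3 ≤ k) (g : V → ℕ)
    (hmem : ∀ v, g v ∈ Finset.Icc 1 k)
    (hprop : ∀ a b : V, G.Adj a b → g a ≠ g b)
    (h : ∀ v, g v = 2 → ∃ m, m ∈ Finset.Icc 1 k ∧ m ≠ 2 ∧ ∀ u, G.Adj v u → g u ≠ m) :
    G.Colorable (k - 1) := by
  classical
  set g' : V → ℕ := fun v => if hv : g v = 2 then (h v hv).choose else g v with hg'
  have hg'mem : ∀ v, g' v ∈ Finset.Icc 1 k ∧ g' v ≠ 2 := by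
    intro v
    by_cases hv : g v = 2
    · simp only [hg', dif_pos hv]
      exact ⟨(h v hv).choose_spec.1, (h v hv).choose_spec.2.1⟩
    · simp only [hg', dif_neg hv]
      exact ⟨hmem v, hv⟩
  have hg'prop : ∀ a b : V, G.Adj a b → g' a ≠ g' b := by
    intro a b hab
    by_cases ha : g a = 2 <;> by_cases hb : g b = 2
    · exact absurd (ha.trans hb.symm) (hprop a b hab)
    · simp only [hg', dif_pos ha, dif_neg hb]
      exact fun he => (h a ha).choose_spec.2.2 b hab he.symm
    · simp only [hg', dif_neg ha, dif_pos hb]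
      exact fun he => (h b hb).choose_spec.2.2 a hab.symm he
    · simp only [hg', dif_neg ha, dif_neg hb]
      exact hprop a b hab
  -- encode the colors {1} ∪ {3,…,k} into Fin (k-1)
  have hbound : ∀ v, (if g' v = 1 then 0 else g' v - 2) < k - 1 := by
    intro v
    obtain ⟨hv1, hv2⟩ := hg'mem v
    simp only [Finset.mem_Icc] at hv1
    by_cases h1 : g' v = 1 <;> simp [h1] <;> omega
  refine ⟨Coloring.mk (fun v => ⟨if g' v = 1 then 0 else g' v - 2, hbound v⟩) ?_⟩
  intro a b hab he
  have hne := hg'prop a b hab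
  have h1 := (hg'mem a); have h2 := (hg'mem b)
  simp only [Finset.mem_Icc] at h1 h2
  rw [Fin.mk_eq_mk] at he
  by_cases ha1 : g' a = 1 <;> by_cases hb1 : g' b = 1 <;>
    simp [ha1, hb1] at he <;> omega

/-- A connected graph with an edge and a third vertex has a vertex with two
distinct neighbors. -/
lemma exists_two_neighbors {V : Type*} (G : SimpleGraph V) (hconn : G.Connected)
    {a b c : V} (hab : G.Adj a b) (hca : c ≠ a) (hcb : c ≠ b) :
    ∃ x y z : V, G.Adj x y ∧ G.Adj x z ∧ y ≠ z := by
  classical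
  obtain ⟨p, hp⟩ := ((hconn b c).elim fun w => ⟨w.toPath⟩ : Nonempty (G.Path b c))
  revert hp
  cases p with
  | nil => exact fun _ => absurd rfl hcb
  | @cons _ d _ h q =>
    intro hp
    by_cases hd : d = a
    · have hbq : b ∉ q.support := by
        have hnd := hp.support_nodup
        simp only [SimpleGraph.Walk.support_cons, List.nodup_cons] at hnd
        exact hnd.1
      revert hbq
      cases q with
      | nil => exact fun _ => absurd (hd ▸ rfl : c = a) hca
      | @cons _ e _ h' r =>
        intro hbq
        have hbe : b ≠ e := by
          intro hbe
          apply hbq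
          simp only [SimpleGraph.Walk.support_cons, List.mem_cons]
          exact Or.inr (hbe ▸ r.start_mem_support)
        exact ⟨d, b, e, by rw [hd]; exact hab, h', hbe⟩
    · exact ⟨b, a, d, hab.symm, h, fun hh => hd hh.symm⟩


theorem chromatic_eq_gracefulChromatic_iff {V : Type*} [Fintype V] (G : SimpleGraph V)
    (hconn : G.Connected) (hedge : ∃ a b : V, G.Adj a b) :
    G.chromaticNumber = (gracefulChromaticNumber G : ℕ∞) ↔
      Nonempty (G ≃g (⊤ : SimpleGraph (Fin 2))) := by
  classical
  obtain ⟨a, b, hab⟩ := hedge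
  have hne : a ≠ b := hab.ne
  -- 2 ≤ chromatic number
  have hclique : G.IsClique ({a, b} : Finset V) := by
    rw [Finset.coe_pair, SimpleGraph.isClique_pair]
    exact fun _ => hab
  have h2chrom : (2 : ℕ∞) ≤ G.chromaticNumber := by
    have := hclique.card_le_chromaticNumber
    rwa [Finset.card_pair hne] at this
  constructor
  · intro h
    set S := {l | 2 ≤ l ∧ ∃ g : V → ℕ, IsGracefulLColoring G l g} with hS
    set k := gracefulChromaticNumber G with hk
    have hSne : S.Nonempty := by
      by_contra hemp
      rw [Set.not_nonempty_iff_eq_empty] at hemp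
      have : k = 0 := by rw [hk, gracefulChromaticNumber, ← hS, hemp, Nat.sInf_empty]
      rw [this] at h
      rw [h] at h2chrom
      simp at h2chrom
    obtain ⟨hk2, g, hmem, hprop, hgrace⟩ : k ∈ S := Nat.sInf_mem hSne
    -- first, k = 2
    have hkeq : k = 2 := by
      by_contra hk3'
      have hk3 : 3 ≤ k := by omega
      by_cases H : ∀ v, g v = 2 → ∃ m, m ∈ Finset.Icc 1 k ∧ m ≠ 2 ∧ ∀ u, G.Adj v u → g u ≠ m
      · have hcol := colorable_of_recolor G k hk3 g hmem hprop H
        have hle := hcol.chromaticNumber_le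
        rw [h] at hle
        rw [Nat.cast_le] at hle
        omega
      · push_neg at H
        obtain ⟨v, hv2, Hv⟩ := H
        obtain ⟨u1, hu1, hgu1⟩ := Hv 1 (by simp [Finset.mem_Icc]; omega) (by omega)
        obtain ⟨u3, hu3, hgu3⟩ := Hv 3 (by simp [Finset.mem_Icc]; omega) (by omega)
        have hu13 : u1 ≠ u3 := by
          intro hq; rw [hq, hgu3] at hgu1; omega
        have := hgrace v u1 u3 hu1 hu3 hu13
        rw [hv2, hgu1, hgu3] at this
        exact this rfl
    -- (handled above). Now k = 2: every vertex is a or b.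
    rw [hkeq] at hmem
    have hVab : ∀ c : V, c = a ∨ c = b := by
      intro c
      by_contra hc
      push_neg at hc
      obtain ⟨x, y, z, hxy, hxz, hyz⟩ := exists_two_neighbors G hconn hab hc.1 hc.2
      have h1 := hmem x; have h2 := hmem y; have h3 := hmem z
      simp only [Finset.mem_Icc] at h1 h2 h3
      have hxy' := hprop x y hxy
      have hxz' := hprop x z hxz
      have hgyz : g y = g z := by omega
      have := hgrace x y z hxy hxz hyz
      rw [hgyz] at this
      exact this rfl
    -- build the isomorphism
    refine ⟨⟨Equiv.mk (fun v => if v = a then 0 else 1)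
      (fun i => if i = 0 then a else b) ?_ ?_, ?_⟩⟩
    · intro v
      rcases hVab v with rfl | rfl
      · simp
      · simp [Ne.symm hne]
    · intro i
      fin_cases i <;> simp [Ne.symm hne]
    · intro x y
      simp only [Equiv.coe_fn_mk, SimpleGraph.top_adj]
      rcases hVab x with rfl | rfl <;> rcases hVab y with rfl | rfl
      · simp [G.irrefl]
      · simp [Ne.symm hne, hab]
      · simp [Ne.symm hne, hab.symm]
      · simp [Ne.symm hne, G.irrefl]
  · rintro ⟨e⟩
    have hadj : ∀ x y : V, G.Adj x y ↔ e x ≠ e y := by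
      intro x y
      rw [← e.map_rel_iff, SimpleGraph.top_adj]
    -- chromatic number = 2
    have hcol2 : G.Colorable 2 := by
      refine ⟨SimpleGraph.Coloring.mk (fun v => e v) ?_⟩
      intro x y hxy
      exact (hadj x y).mp hxy
    have hchrom : G.chromaticNumber = (2 : ℕ∞) :=
      le_antisymm (by exact_mod_cast hcol2.chromaticNumber_le) h2chrom
    -- graceful chromatic number = 2
    have hgc : gracefulChromaticNumber G = 2 := by
      have hs2 : (2 : ℕ) ∈ {l | 2 ≤ l ∧ ∃ g : V → ℕ, IsGracefulLColoring G l g} := by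
        refine ⟨le_refl 2, fun v => (e v : ℕ) + 1, ?_, ?_, ?_⟩
        · intro v
          have := (e v).isLt
          simp [Finset.mem_Icc]; omega
        · intro x y hxy
          have := (hadj x y).mp hxy
          intro hq
          simp only [add_left_inj] at hq
          exact this (Fin.val_injective hq)
        · intro x y z hxy hxz hyz
          have h1 := (hadj x y).mp hxy
          have h2 := (hadj x z).mp hxz
          have : e y = e z := by omega
          exact absurd (e.injective this) hyz
      refine le_antisymm (Nat.sInf_le hs2) (le_csInf ⟨2, hs2⟩ ?_)
      exact fun l hl => hl.1
    rw [hchrom, hgc]; norm_num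
end

section
/- For a simple connected graph G with at least one edge, the graceful chromatic number of G equals 3 if and only if G is isomorphic to the path P_3 on three vertices or to the path P_4 on four vertices. -/
open SimpleGraph

section Aux

variable {V : Type*} {W : Type*}

lemma graceful_comp {G : SimpleGraph V} {H : SimpleGraph W} (e : G ≃g H) {l : ℕ} {g : W → ℕ}
    (hg : IsGracefulLColoring H l g) : IsGracefulLColoring G l (g ∘ e) := by
  obtain ⟨hmem, hprop, hedge⟩ := hg
  refine ⟨fun v => hmem (e v), ?_, ?_⟩
  · intro a b hab
    exact hprop (e a) (e b) (e.map_adj_iff.mpr hab)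
  · intro a b c hab hac hbc
    exact hedge (e a) (e b) (e c) (e.map_adj_iff.mpr hab) (e.map_adj_iff.mpr hac)
      (fun h => hbc (e.injective h))

lemma gcn_iso {G : SimpleGraph V} {H : SimpleGraph W} (e : G ≃g H) :
    gracefulChromaticNumber G = gracefulChromaticNumber H := by
  unfold gracefulChromaticNumber
  congr 1
  ext l
  constructor
  · rintro ⟨h2, g, hg⟩
    exact ⟨h2, g ∘ e.symm, graceful_comp e.symm hg⟩
  · rintro ⟨h2, g, hg⟩
    exact ⟨h2, g ∘ e, graceful_comp e hg⟩

lemma gcn_eq_three_of (G : SimpleGraph V) (h3 : ∃ g : V → ℕ, IsGracefulLColoring G 3 g)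
    (h2 : ¬ ∃ g : V → ℕ, IsGracefulLColoring G 2 g) : gracefulChromaticNumber G = 3 := by
  apply le_antisymm
  · exact Nat.sInf_le ⟨by norm_num, h3⟩
  · have hm : (3 : ℕ) ∈ {l | 2 ≤ l ∧ ∃ g : V → ℕ, IsGracefulLColoring G l g} :=
      ⟨by norm_num, h3⟩
    apply le_csInf ⟨3, hm⟩
    rintro l ⟨hl2, g, hg⟩
    by_contra h
    push_neg at h
    interval_cases l
    exact h2 ⟨g, hg⟩

lemma walk_closed {G : SimpleGraph V} {S : Set V}
    (hcl : ∀ a ∈ S, ∀ b, G.Adj a b → b ∈ S) :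
    ∀ (a b : V) (_ : G.Walk a b), a ∈ S → b ∈ S := by
  intro a b w
  induction w with
  | nil => exact id
  | cons h p ih => intro ha; exact ih (hcl _ ha _ h)

lemma all_mem_of_closed {G : SimpleGraph V} (hconn : G.Connected) {S : Set V} {v0 : V}
    (h0 : v0 ∈ S) (hcl : ∀ a ∈ S, ∀ b, G.Adj a b → b ∈ S) (x : V) : x ∈ S := by
  obtain ⟨w⟩ := hconn.preconnected v0 x
  exact walk_closed hcl v0 x w h0

lemma graceful_flip {G : SimpleGraph V} {g : V → ℕ} (hg : IsGracefulLColoring G 3 g) :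
    IsGracefulLColoring G 3 (fun v => 4 - g v) := by
  obtain ⟨hmem, hprop, hedge⟩ := hg
  have hb : ∀ v, 1 ≤ g v ∧ g v ≤ 3 := fun v => Finset.mem_Icc.mp (hmem v)
  refine ⟨?_, ?_, ?_⟩
  · intro v
    have := hb v
    simp only [Finset.mem_Icc]
    omega
  · intro a b hab
    have := hprop a b hab
    have := hb a; have := hb b
    simp only
    omega
  · intro a b c hab hac hbc
    have h := hedge a b c hab hac hbc
    have := hb a; have := hb b; have := hb c
    simp only [Nat.dist] at h ⊢
    omega

lemma p3_col : IsGracefulLColoring (pathGraph 3) 3 ![2,1,3] := by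
  refine ⟨by decide, ?_, ?_⟩
  · intro a b hab
    rw [pathGraph_adj] at hab
    revert hab
    fin_cases a <;> fin_cases b <;> decide
  · intro a b c hab hac hbc
    rw [pathGraph_adj] at hab hac
    revert hab hac hbc
    fin_cases a <;> fin_cases b <;> fin_cases c <;> decide

lemma p4_col : IsGracefulLColoring (pathGraph 4) 3 ![2,1,3,2] := by
  refine ⟨by decide, ?_, ?_⟩
  · intro a b hab
    rw [pathGraph_adj] at hab
    revert hab
    fin_cases a <;> fin_cases b <;> decide
  · intro a b c hab hac hbc
    rw [pathGraph_adj] at hab hac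
    revert hab hac hbc
    fin_cases a <;> fin_cases b <;> fin_cases c <;> decide

lemma p3_no2 : ¬ ∃ g : Fin 3 → ℕ, IsGracefulLColoring (pathGraph 3) 2 g := by
  rintro ⟨g, hmem, hprop, hedge⟩
  have a01 : (pathGraph 3).Adj 1 0 := by rw [pathGraph_adj]; decide
  have a12 : (pathGraph 3).Adj 1 2 := by rw [pathGraph_adj]; decide
  have h := hedge 1 0 2 a01 a12 (by decide)
  have h0 := Finset.mem_Icc.mp (hmem 0)
  have h1 := Finset.mem_Icc.mp (hmem 1)
  have h2 := Finset.mem_Icc.mp (hmem 2)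
  have n0 := hprop 1 0 a01
  have n2 := hprop 1 2 a12
  simp only [Nat.dist] at h
  omega

lemma p4_no2 : ¬ ∃ g : Fin 4 → ℕ, IsGracefulLColoring (pathGraph 4) 2 g := by
  rintro ⟨g, hmem, hprop, hedge⟩
  have a01 : (pathGraph 4).Adj 1 0 := by rw [pathGraph_adj]; decide
  have a12 : (pathGraph 4).Adj 1 2 := by rw [pathGraph_adj]; decide
  have h := hedge 1 0 2 a01 a12 (by decide)
  have h0 := Finset.mem_Icc.mp (hmem 0)
  have h1 := Finset.mem_Icc.mp (hmem 1)
  have h2 := Finset.mem_Icc.mp (hmem 2)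
  have n0 := hprop 1 0 a01
  have n2 := hprop 1 2 a12
  simp only [Nat.dist] at h
  omega

/-- Main structural lemma: a degree-2 vertex colored 1 with neighbors colored 2 and 3
forces the graph to be `P₃` or `P₄`. -/
lemma main_case {G : SimpleGraph V} (hconn : G.Connected) {g : V → ℕ}
    (hg : IsGracefulLColoring G 3 g) {v p q : V}
    (hvp : G.Adj v p) (hvq : G.Adj v q) (hpq : p ≠ q)
    (hv : g v = 1) (hp : g p = 2) (hq : g q = 3) :
    Nonempty (G ≃g SimpleGraph.pathGraph 3) ∨ Nonempty (G ≃g SimpleGraph.pathGraph 4) := by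
  classical
  obtain ⟨hmem, hprop, hedge⟩ := hg
  have hb : ∀ x, 1 ≤ g x ∧ g x ≤ 3 := fun x => Finset.mem_Icc.mp (hmem x)
  -- the unique neighbor of p is v
  have Np : ∀ y, G.Adj p y → y = v := by
    intro y hy
    by_contra hne
    have h1 := hedge p y v hy hvp.symm hne
    have h2 := hprop p y hy
    have := hb y
    simp only [Nat.dist] at h1
    omega
  -- neighbors of v are p or q
  have Nv : ∀ y, G.Adj v y → y = p ∨ y = q := by
    intro y hy
    by_contra hne
    push_neg at hne
    have h1 := hedge v y p hy hvp hne.1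
    have h2 := hedge v y q hy hvq hne.2
    have h3 := hprop v y hy
    have := hb y
    simp only [Nat.dist] at h1 h2
    omega
  -- a neighbor of q other than v is colored 2
  have Nq2 : ∀ y, G.Adj q y → y ≠ v → g y = 2 := by
    intro y hy hne
    have h1 := hedge q y v hy hvq.symm hne
    have h2 := hprop q y hy
    have := hb y
    simp only [Nat.dist] at h1
    omega
  have Nquniq : ∀ y z, G.Adj q y → G.Adj q z → y ≠ v → z ≠ v → y = z := by
    intro y z hy hz hyv hzv
    by_contra hne
    have h1 := hedge q y z hy hz hne
    have h2 := Nq2 y hy hyv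
    have h3 := Nq2 z hz hzv
    simp only [Nat.dist] at h1
    omega
  have hvp' : v ≠ p := hvp.ne
  have hvq' : v ≠ q := hvq.ne
  have hnadjpq : ¬ G.Adj p q := fun h => hvq' (Np q h).symm
  by_cases hr : ∃ r, G.Adj q r ∧ r ≠ v
  · -- P4 case
    obtain ⟨r, hqr, hrv⟩ := hr
    have hgr : g r = 2 := Nq2 r hqr hrv
    have hrq : r ≠ q := hqr.ne'
    have hrp : r ≠ p := by
      intro h
      subst h
      exact hvq' (Np q hqr.symm).symm
    have Nr : ∀ y, G.Adj r y → y = q := by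
      intro y hy
      by_contra hne
      have h1 := hedge r y q hy hqr.symm hne
      have h2 := hprop r y hy
      have := hb y
      simp only [Nat.dist] at h1
      omega
    have Nq : ∀ y, G.Adj q y → y = v ∨ y = r := by
      intro y hy
      by_cases h : y = v
      · exact Or.inl h
      · exact Or.inr (Nquniq y r hy hqr h hrv)
    have hnadjpr : ¬ G.Adj p r := fun h => hrv (Np r h)
    have hnadjvr : ¬ G.Adj v r := by
      intro h
      rcases Nv r h with h' | h'
      · exact hrp h'
      · exact hrq h'
    -- every vertex is one of v, p, q, r
    have hclosed : ∀ a ∈ ({v, p, q, r} : Set V), ∀ b, G.Adj a b → b ∈ ({v, p, q, r} : Set V) := by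
      intro a ha b hab
      simp only [Set.mem_insert_iff, Set.mem_singleton_iff] at ha ⊢
      rcases ha with rfl | rfl | rfl | rfl
      · rcases Nv b hab with rfl | rfl
        · tauto
        · tauto
      · have := Np b hab; tauto
      · rcases Nq b hab with rfl | rfl
        · tauto
        · tauto
      · have := Nr b hab; tauto
    have hall : ∀ x : V, x = v ∨ x = p ∨ x = q ∨ x = r := by
      intro x
      have hx : x ∈ ({v, p, q, r} : Set V) :=
        all_mem_of_closed hconn (by simp : v ∈ ({v, p, q, r} : Set V)) hclosed x
      simpa only [Set.mem_insert_iff, Set.mem_singleton_iff] using hx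
    refine Or.inr ⟨?_⟩
    have hpv : p ≠ v := Ne.symm hvp'
    have hqv : q ≠ v := Ne.symm hvq'
    have hqp : q ≠ p := Ne.symm hpq
    let f : V → Fin 4 := fun x => if x = p then 0 else if x = v then 1 else if x = q then 2 else 3
    have fp : f p = 0 := by simp [f]
    have fv : f v = 1 := by simp [f, hvp']
    have fq : f q = 2 := by simp [f, hqp, hqv]
    have fr : f r = 3 := by simp [f, hrp, hrv, hrq]
    let e : V ≃ Fin 4 :=
      { toFun := f
        invFun := ![p, v, q, r]
        left_inv := by
          intro x
          rcases hall x with rfl | rfl | rfl | rfl <;>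
            simp [fv, fp, fq, fr]
        right_inv := by
          intro i
          fin_cases i <;> simp [fv, fp, fq, fr] }
    refine ⟨e, ?_⟩
    intro a b
    show (pathGraph 4).Adj (f a) (f b) ↔ G.Adj a b
    rcases hall a with rfl | rfl | rfl | rfl <;> rcases hall b with rfl | rfl | rfl | rfl <;>
      simp only [fp, fv, fq, fr]
    all_goals
      first
        | exact iff_of_true (by rw [pathGraph_adj]; decide) hvp
        | exact iff_of_true (by rw [pathGraph_adj]; decide) hvq
        | exact iff_of_true (by rw [pathGraph_adj]; decide) hvp.symm
        | exact iff_of_true (by rw [pathGraph_adj]; decide) hvq.symm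
        | exact iff_of_true (by rw [pathGraph_adj]; decide) hqr
        | exact iff_of_true (by rw [pathGraph_adj]; decide) hqr.symm
        | exact iff_of_false (by rw [pathGraph_adj]; decide) (G.irrefl)
        | exact iff_of_false (by rw [pathGraph_adj]; decide) hnadjpq
        | exact iff_of_false (by rw [pathGraph_adj]; decide) hnadjpr
        | exact iff_of_false (by rw [pathGraph_adj]; decide) hnadjvr
        | exact iff_of_false (by rw [pathGraph_adj]; decide) (fun h => hnadjpq h.symm)
        | exact iff_of_false (by rw [pathGraph_adj]; decide) (fun h => hnadjpr h.symm)
        | exact iff_of_false (by rw [pathGraph_adj]; decide) (fun h => hnadjvr h.symm)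
  · -- P3 case
    push_neg at hr
    have Nq : ∀ y, G.Adj q y → y = v := fun y hy => hr y hy
    have hclosed : ∀ a ∈ ({v, p, q} : Set V), ∀ b, G.Adj a b → b ∈ ({v, p, q} : Set V) := by
      intro a ha b hab
      simp only [Set.mem_insert_iff, Set.mem_singleton_iff] at ha ⊢
      rcases ha with rfl | rfl | rfl
      · rcases Nv b hab with rfl | rfl <;> tauto
      · have := Np b hab; tauto
      · have := Nq b hab; tauto
    have hall : ∀ x : V, x = v ∨ x = p ∨ x = q := by
      intro x
      have hx : x ∈ ({v, p, q} : Set V) :=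
        all_mem_of_closed hconn (by simp : v ∈ ({v, p, q} : Set V)) hclosed x
      simpa only [Set.mem_insert_iff, Set.mem_singleton_iff] using hx
    refine Or.inl ⟨?_⟩
    have hqv : q ≠ v := Ne.symm hvq'
    have hqp : q ≠ p := Ne.symm hpq
    let f : V → Fin 3 := fun x => if x = p then 0 else if x = v then 1 else 2
    have fp : f p = 0 := by simp [f]
    have fv : f v = 1 := by simp [f, hvp']
    have fq : f q = 2 := by simp [f, hqp, hqv]
    let e : V ≃ Fin 3 :=
      { toFun := f
        invFun := ![p, v, q]
        left_inv := by
          intro x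
          rcases hall x with rfl | rfl | rfl <;> simp [fv, fp, fq]
        right_inv := by
          intro i
          fin_cases i <;> simp [fv, fp, fq] }
    refine ⟨e, ?_⟩
    intro a b
    show (pathGraph 3).Adj (f a) (f b) ↔ G.Adj a b
    rcases hall a with rfl | rfl | rfl <;> rcases hall b with rfl | rfl | rfl <;>
      simp only [fp, fv, fq]
    all_goals
      first
        | exact iff_of_true (by rw [pathGraph_adj]; decide) hvp
        | exact iff_of_true (by rw [pathGraph_adj]; decide) hvq
        | exact iff_of_true (by rw [pathGraph_adj]; decide) hvp.symm
        | exact iff_of_true (by rw [pathGraph_adj]; decide) hvq.symm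
        | exact iff_of_false (by rw [pathGraph_adj]; decide) (G.irrefl)
        | exact iff_of_false (by rw [pathGraph_adj]; decide) hnadjpq
        | exact iff_of_false (by rw [pathGraph_adj]; decide) (fun h => hnadjpq h.symm)

/-- Wrapper: a degree-2 vertex colored 1 forces `P₃` or `P₄`. -/
lemma main_case' {G : SimpleGraph V} (hconn : G.Connected) {g : V → ℕ}
    (hg : IsGracefulLColoring G 3 g) {v p q : V}
    (hvp : G.Adj v p) (hvq : G.Adj v q) (hpq : p ≠ q) (hv : g v = 1) :
    Nonempty (G ≃g SimpleGraph.pathGraph 3) ∨ Nonempty (G ≃g SimpleGraph.pathGraph 4) := by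
  obtain ⟨hmem, hprop, hedge⟩ := id hg
  have hbp := Finset.mem_Icc.mp (hmem p)
  have hbq := Finset.mem_Icc.mp (hmem q)
  have h1 := hedge v p q hvp hvq hpq
  have h2 := hprop v p hvp
  have h3 := hprop v q hvq
  by_cases hgp : g p = 2
  · have hgq : g q = 3 := by simp only [Nat.dist] at h1; omega
    exact main_case hconn hg hvp hvq hpq hv hgp hgq
  · have hgp3 : g p = 3 := by omega
    have hgq : g q = 2 := by simp only [Nat.dist] at h1; omega
    exact main_case hconn hg hvq hvp (Ne.symm hpq) hv hgq hgp3

end Aux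

theorem gracefulChromatic_eq_three_iff {V : Type*} [Fintype V] (G : SimpleGraph V)
    (hconn : G.Connected) (hedge : ∃ a b : V, G.Adj a b) :
    gracefulChromaticNumber G = 3 ↔
      (Nonempty (G ≃g SimpleGraph.pathGraph 3) ∨ Nonempty (G ≃g SimpleGraph.pathGraph 4)) := by
  classical
  constructor
  · intro h3
    have hne : {l | 2 ≤ l ∧ ∃ g : V → ℕ, IsGracefulLColoring G l g}.Nonempty := by
      by_contra h
      rw [Set.not_nonempty_iff_eq_empty] at h
      rw [gracefulChromaticNumber, h, Nat.sInf_empty] at h3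
      omega
    have h3' : 3 ∈ {l | 2 ≤ l ∧ ∃ g : V → ℕ, IsGracefulLColoring G l g} := by
      rw [← h3]
      exact Nat.sInf_mem hne
    obtain ⟨-, g, hg⟩ := h3'
    have h2 : ¬ ∃ g : V → ℕ, IsGracefulLColoring G 2 g := by
      rintro ⟨g2, hg2⟩
      have : gracefulChromaticNumber G ≤ 2 := Nat.sInf_le ⟨le_refl 2, g2, hg2⟩
      omega
    by_cases hdeg : ∃ v x y : V, G.Adj v x ∧ G.Adj v y ∧ x ≠ y
    · obtain ⟨v, x, y, hvx, hvy, hxy⟩ := hdeg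
      obtain ⟨hmem, hprop, hedgep⟩ := id hg
      have hbv := Finset.mem_Icc.mp (hmem v)
      have hbx := Finset.mem_Icc.mp (hmem x)
      have hby := Finset.mem_Icc.mp (hmem y)
      have h1 := hedgep v x y hvx hvy hxy
      have h2x := hprop v x hvx
      have h2y := hprop v y hvy
      have hv13 : g v = 1 ∨ g v = 3 := by
        simp only [Nat.dist] at h1
        omega
      rcases hv13 with hv1 | hv3
      · exact main_case' hconn hg hvx hvy hxy hv1
      · have hg' := graceful_flip hg
        have hv1 : (fun w => 4 - g w) v = 1 := by simp only; omega
        exact main_case' hconn hg' hvx hvy hxy hv1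
    · -- max degree ≤ 1 : the graph is K₂, which has a graceful 2-coloring
      exfalso
      push_neg at hdeg
      obtain ⟨x, y, hxy⟩ := hedge
      have hclosed : ∀ a ∈ ({x, y} : Set V), ∀ b, G.Adj a b → b ∈ ({x, y} : Set V) := by
        intro a ha b hab
        simp only [Set.mem_insert_iff, Set.mem_singleton_iff] at ha ⊢
        rcases ha with rfl | rfl
        · exact Or.inr (hdeg a b y hab hxy)
        · exact Or.inl (hdeg a b x hab hxy.symm)
      have hall : ∀ z : V, z = x ∨ z = y := by
        intro z
        have hz : z ∈ ({x, y} : Set V) :=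
          all_mem_of_closed hconn (by simp : x ∈ ({x, y} : Set V)) hclosed z
        simpa only [Set.mem_insert_iff, Set.mem_singleton_iff] using hz
      apply h2
      refine ⟨fun z => if z = x then 1 else 2, ?_, ?_, ?_⟩
      · intro v
        simp only [Finset.mem_Icc]
        split_ifs <;> omega
      · intro a b hab
        have hne := hab.ne
        rcases hall a with rfl | rfl <;> rcases hall b with rfl | rfl <;>
          simp_all [hxy.ne, hxy.ne']
      · intro a b c hab hac hbc
        exact absurd (hdeg a b c hab hac) hbc
  · rintro (h | h)
    · obtain ⟨e⟩ := h
      rw [gcn_iso e]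
      exact gcn_eq_three_of _ ⟨![2,1,3], p3_col⟩ p3_no2
    · obtain ⟨e⟩ := h
      rw [gcn_iso e]
      exact gcn_eq_three_of _ ⟨![2,1,3,2], p4_col⟩ p4_no2
end

section
/- The graceful chromatic number of the complete graph K_4 is 5; a graceful 5-coloring is given by assigning the four vertices the colors 1, 2, 4, 5. -/
theorem gracefulChromatic_K4 :
    gracefulChromaticNumber (⊤ : SimpleGraph (Fin 4)) = 5 ∧
      IsGracefulLColoring (⊤ : SimpleGraph (Fin 4)) 5 ![1, 2, 4, 5] := by
  have hcol : IsGracefulLColoring (⊤ : SimpleGraph (Fin 4)) 5 ![1, 2, 4, 5] := by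
    refine ⟨by decide, by decide, ?_⟩
    have : ∀ a b c : Fin 4, b ≠ c →
        Nat.dist (![1,2,4,5] a) (![1,2,4,5] b) ≠ Nat.dist (![1,2,4,5] a) (![1,2,4,5] c) ∨
        (a = b ∨ a = c) := by decide
    intro a b c hab hac hbc
    rcases this a b c hbc with h | h | h
    · exact h
    · exact absurd h (SimpleGraph.Adj.ne hab)
    · exact absurd h (SimpleGraph.Adj.ne hac)
  have hno4 : ∀ g : Fin 4 → ℕ, ¬ IsGracefulLColoring (⊤ : SimpleGraph (Fin 4)) 4 g := by
    intro g ⟨h1, h2, h3⟩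
    have hb : ∀ v, g v < 5 := by
      intro v
      have := (Finset.mem_Icc.mp (h1 v)).2
      omega
    set g' : Fin 4 → Fin 5 := fun v => ⟨g v, hb v⟩ with hg'
    have key : ¬ ∃ g' : Fin 4 → Fin 5,
        (∀ v, 1 ≤ (g' v : ℕ)) ∧ (∀ a b : Fin 4, a ≠ b → g' a ≠ g' b) ∧
        (∀ a b c : Fin 4, a ≠ b → a ≠ c → b ≠ c →
          Nat.dist (g' a : ℕ) (g' b : ℕ) ≠ Nat.dist (g' a : ℕ) (g' c : ℕ)) := by
      set_option maxRecDepth 20000 in decide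
    exact key ⟨g', fun v => (Finset.mem_Icc.mp (h1 v)).1,
      fun a b hab hgab => h2 a b (by simpa using hab) (by
        have : g a = g b := congrArg Fin.val hgab
        exact this),
      fun a b c hab hac hbc => h3 a b c (by simpa using hab) (by simpa using hac) hbc⟩
  have h5 : 5 ∈ {l | 2 ≤ l ∧ ∃ g : Fin 4 → ℕ, IsGracefulLColoring (⊤ : SimpleGraph (Fin 4)) l g} :=
    ⟨by norm_num, ![1, 2, 4, 5], hcol⟩
  refine ⟨le_antisymm (Nat.sInf_le h5) ?_, hcol⟩
  refine le_csInf ⟨5, h5⟩ ?_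
  rintro m ⟨hm2, g, hg1, hg2, hg3⟩
  by_contra h
  push_neg at h
  refine hno4 g ⟨?_, hg2, hg3⟩
  intro v
  have := Finset.mem_Icc.mp (hg1 v)
  exact Finset.mem_Icc.mpr ⟨this.1, by omega⟩
end

section
/- The graceful chromatic number of the complete graph K_5 is 9; a graceful 9-coloring is given by assigning the five vertices the colors 1, 2, 4, 8, 9. -/
set_option maxRecDepth 10000 in
lemma no8_aux : ∀ S ∈ (Finset.Icc 1 8).powersetCard 5,
    ∃ a ∈ S, ∃ b ∈ S, ∃ c ∈ S, a ≠ b ∧ b ≠ c ∧ a ≠ c ∧ a + c = b + b := by decide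

lemma nine_works : IsGracefulLColoring (⊤ : SimpleGraph (Fin 5)) 9 ![1, 2, 4, 8, 9] := by
  refine ⟨by decide, ?_, ?_⟩
  · show ∀ a b : Fin 5, (⊤ : SimpleGraph (Fin 5)).Adj a b → _
    simp only [SimpleGraph.top_adj]
    decide
  · show ∀ a b c : Fin 5, (⊤ : SimpleGraph (Fin 5)).Adj a b → (⊤ : SimpleGraph (Fin 5)).Adj a c →
      b ≠ c → Nat.dist _ _ ≠ Nat.dist _ _
    simp only [SimpleGraph.top_adj]
    decide

theorem gracefulChromatic_K5 :
    gracefulChromaticNumber (⊤ : SimpleGraph (Fin 5)) = 9 ∧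
      IsGracefulLColoring (⊤ : SimpleGraph (Fin 5)) 9 ![1, 2, 4, 8, 9] := by
  refine ⟨?_, nine_works⟩
  have h9 : (9 : ℕ) ∈ {l | 2 ≤ l ∧ ∃ g : Fin 5 → ℕ,
      IsGracefulLColoring (⊤ : SimpleGraph (Fin 5)) l g} :=
    ⟨by norm_num, ![1, 2, 4, 8, 9], nine_works⟩
  refine le_antisymm (Nat.sInf_le h9) ?_
  refine le_csInf ⟨9, h9⟩ ?_
  rintro l ⟨-, g, hmem, hproper, hedge⟩
  by_contra hlt
  push_neg at hlt
  -- so l ≤ 8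
  have hinj : ∀ a b : Fin 5, a ≠ b → g a ≠ g b := by
    intro a b hab
    exact hproper a b (by simpa using hab)
  set T : Finset ℕ := Finset.image g Finset.univ with hT
  have hTcard : T.card = 5 := by
    rw [hT, Finset.card_image_of_injective _ (fun a b h => by
      by_contra hne; exact hinj a b hne h)]
    simp
  have hTsub : T ⊆ Finset.Icc 1 8 := by
    intro x hx
    rw [hT, Finset.mem_image] at hx
    obtain ⟨v, -, rfl⟩ := hx
    have := hmem v
    rw [Finset.mem_Icc] at this ⊢
    omega
  obtain ⟨a, ha, b, hb, c, hc, hab, hbc, hac, hsum⟩ :=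
    no8_aux T (Finset.mem_powersetCard.2 ⟨hTsub, hTcard⟩)
  rw [hT, Finset.mem_image] at ha hb hc
  obtain ⟨x, -, rfl⟩ := ha
  obtain ⟨y, -, rfl⟩ := hb
  obtain ⟨z, -, rfl⟩ := hc
  have hxy : x ≠ y := fun h => hab (by rw [h])
  have hyz : y ≠ z := fun h => hbc (by rw [h])
  have hxz : x ≠ z := fun h => hac (by rw [h])
  have := hedge y x z (by simpa using hxy.symm) (by simpa using hyz) hxz
  apply this
  simp only [Nat.dist]
  omega
end

section
/- The graceful chromatic number of the complete graph K_6 is 11; a graceful 11-coloring is given by assigning the six vertices the colors 1, 2, 4, 5, 10, 11. -/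
/-! On `K₆` a graceful coloring is injective, and its set of colors contains no 3-term arithmetic
progression: the vertex with the middle color would see two edges with equal difference.
Every six-element subset of `{1, …, 10}` contains such a progression, so at least 11 colors are
needed, while `{1, 2, 4, 5, 10, 11}` is progression-free. -/

open Finset

instance (S : Finset ℕ) : Decidable (ThreeAPFreeSet S) := by
  unfold ThreeAPFreeSet; infer_instance

theorem ThreeAPFreeSet.mono {S T : Finset ℕ} (hT : ThreeAPFreeSet T) (hST : S ⊆ T) :
    ThreeAPFreeSet S :=
  fun a ha b hb c hc => hT a (hST ha) b (hST hb) c (hST hc)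

theorem ThreeAPFreeSet.card_le_five {S : Finset ℕ} (hS : ThreeAPFreeSet S)
    (hS10 : S ⊆ Icc 1 10) : #S ≤ 5 := by
  by_contra! hcard
  obtain ⟨T, hTS, hT⟩ := exists_subset_card_eq (show 6 ≤ #S from hcard)
  have hT10 : T ∈ (Icc 1 10).powersetCard 6 := mem_powersetCard.2 ⟨hTS.trans hS10, hT⟩
  have no_free : ∀ T ∈ (Icc 1 10).powersetCard 6, ¬ ThreeAPFreeSet T := by decide +kernel
  exact no_free T hT10 (hS.mono hTS)

theorem IsGracefulLColoring.mono {V : Type*} {G : SimpleGraph V} {l m : ℕ} {g : V → ℕ}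
    (hg : IsGracefulLColoring G l g) (hlm : l ≤ m) : IsGracefulLColoring G m g :=
  ⟨fun v => Icc_subset_Icc_right hlm (hg.1 v), hg.2⟩

theorem gracefulChromaticNumber_eq_succ {V : Type*} {G : SimpleGraph V} {l : ℕ} (hl : 1 ≤ l)
    (hcol : ∃ g, IsGracefulLColoring G (l + 1) g) (hnot : ∀ g, ¬ IsGracefulLColoring G l g) :
    gracefulChromaticNumber G = l + 1 := by
  refine le_antisymm (Nat.sInf_le ⟨by omega, hcol⟩) (le_csInf ⟨l + 1, by omega, hcol⟩ ?_)
  rintro m ⟨-, g, hg⟩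
  by_contra! hm
  exact hnot g (hg.mono (Nat.le_of_lt_succ hm))

theorem injective_of_top_adj_ne {V : Type*} {g : V → ℕ}
    (hg : ∀ a b : V, (⊤ : SimpleGraph V).Adj a b → g a ≠ g b) : Function.Injective g := by
  intro a b hab
  by_contra hne
  exact hg a b hne hab

theorem GracefulEdgeProper.threeAPFreeSet_image_top {V : Type*} [Fintype V] [DecidableEq V]
    {g : V → ℕ} (hg : GracefulEdgeProper (⊤ : SimpleGraph V) g) :
    ThreeAPFreeSet (univ.image g) := by
  simp only [ThreeAPFreeSet, mem_image, mem_univ, true_and]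
  rintro _ ⟨u, rfl⟩ _ ⟨v, rfl⟩ _ ⟨w, rfl⟩ huv hvw huw hap
  have hdist := hg v u w (fun h => huv (h ▸ rfl)) (fun h => hvw (h ▸ rfl)) (fun h => huw (h ▸ rfl))
  simp only [Nat.dist] at hdist
  omega

theorem not_isGracefulLColoring_top_ten_of_six_le_card {V : Type*} [Fintype V]
    (hV : 6 ≤ Fintype.card V) (g : V → ℕ) : ¬ IsGracefulLColoring (⊤ : SimpleGraph V) 10 g := by
  classical
  rintro ⟨hrange, hproper, hedge⟩
  have hcard : #(univ.image g) = Fintype.card V := by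
    rw [card_image_of_injective _ (injective_of_top_adj_ne hproper), card_univ]
  have hsub : univ.image g ⊆ Icc 1 10 := by
    simpa only [image_subset_iff, mem_univ, true_implies] using hrange
  have := hedge.threeAPFreeSet_image_top.card_le_five hsub
  omega

theorem gracefulChromatic_K6 :
    gracefulChromaticNumber (⊤ : SimpleGraph (Fin 6)) = 11 ∧
      IsGracefulLColoring (⊤ : SimpleGraph (Fin 6)) 11 ![1, 2, 4, 5, 10, 11] := by
  have hcol : IsGracefulLColoring (⊤ : SimpleGraph (Fin 6)) 11 ![1, 2, 4, 5, 10, 11] := by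
    unfold IsGracefulLColoring GracefulEdgeProper
    decide
  exact ⟨gracefulChromaticNumber_eq_succ (by norm_num) ⟨_, hcol⟩
    (not_isGracefulLColoring_top_ten_of_six_le_card (by simp)), hcol⟩
end

section
/- The graceful chromatic number of the complete graph K_7 is 13; a graceful 13-coloring is given by assigning the seven vertices the colors 1, 2, 4, 5, 10, 11, 13. -/
/-- Candidate `m` is compatible with already-chosen elements `s` (all larger than `m`):
it does not create a 3-AP `m < a < b` with `m + b = 2a`. -/
def extOK (s : List ℕ) (m : ℕ) : Bool :=
  s.all fun a => s.all fun b => (m + b != 2 * a) || (a == b)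

/-- Branch-and-bound: an upper bound for the number of elements of `{1,…,n}` that can be
added to `s` keeping the whole set 3-AP-free. -/
def best : List ℕ → ℕ → ℕ
  | _, 0 => 0
  | s, n + 1 => max (best s n) (if extOK s (n + 1) then best ((n + 1) :: s) n + 1 else 0)

lemma best_bound : ∀ (n : ℕ) (s : List ℕ), (∀ x ∈ s, n < x) →
    ∀ T : Finset ℕ, (∀ x ∈ T, x ∈ Finset.Icc 1 n) →
    ThreeAPFreeSet (T ∪ s.toFinset) → T.card ≤ best s n := by
  intro n
  induction n with
  | zero =>
    intro s _ T hT _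
    have : T = ∅ := Finset.eq_empty_of_forall_notMem fun x hx => by
      have := hT x hx; simp at this
    simp [this, best]
  | succ n ih =>
    intro s hs T hT hAP
    by_cases hmem : (n + 1) ∈ T
    · have hext : extOK s (n + 1) = true := by
        by_contra hexf
        simp only [extOK, List.all_eq_true, Bool.or_eq_true, bne_iff_ne, ne_eq, beq_iff_eq,
          not_forall] at hexf
        obtain ⟨a, ha, b, hb, hab⟩ := hexf
        push_neg at hab
        obtain ⟨heq, hne⟩ := hab
        have hna : n + 1 < a := hs a ha
        have hnb : n + 1 < b := hs b hb
        have h1 : (n + 1 : ℕ) ∈ T ∪ s.toFinset := Finset.mem_union_left _ hmem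
        have h2 : a ∈ T ∪ s.toFinset := Finset.mem_union_right _ (List.mem_toFinset.2 ha)
        have h3 : b ∈ T ∪ s.toFinset := Finset.mem_union_right _ (List.mem_toFinset.2 hb)
        have := hAP (n + 1) h1 a h2 b h3 (by omega) hne (by omega)
        apply this
        push_cast
        omega
      have hT' : ∀ x ∈ T.erase (n + 1), x ∈ Finset.Icc 1 n := by
        intro x hx
        have hx1 := Finset.mem_of_mem_erase hx
        have hx2 := Finset.ne_of_mem_erase hx
        have := hT x hx1
        simp at this ⊢
        omega
      have hunion : T.erase (n + 1) ∪ ((n + 1) :: s).toFinset = T ∪ s.toFinset := by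
        ext x
        simp only [Finset.mem_union, Finset.mem_erase, List.toFinset_cons,
          Finset.mem_insert, List.mem_toFinset]
        by_cases hx : x = n + 1 <;> simp [hx, hmem]
      have hcard := Finset.card_erase_of_mem hmem
      have hpos : 0 < T.card := Finset.card_pos.2 ⟨_, hmem⟩
      have := ih ((n + 1) :: s)
        (by intro x hx; rcases List.mem_cons.1 hx with h | h; omega; exact
          Nat.lt_of_lt_of_le (Nat.lt_succ_self n) (le_of_lt (hs x h)))
        (T.erase (n + 1)) hT' (by rw [hunion]; exact hAP)
      have hle : T.card ≤ best ((n + 1) :: s) n + 1 := by omega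
      calc T.card ≤ best ((n + 1) :: s) n + 1 := hle
        _ ≤ best s (n + 1) := by rw [best, if_pos hext]; exact le_max_right _ _
    · have hT' : ∀ x ∈ T, x ∈ Finset.Icc 1 n := by
        intro x hx
        have := hT x hx
        have hne : x ≠ n + 1 := fun h => hmem (h ▸ hx)
        simp at this ⊢
        omega
      have := ih s (fun x hx => Nat.lt_of_lt_of_le (Nat.lt_succ_self n) (le_of_lt (hs x hx)))
        T hT' hAP
      calc T.card ≤ best s n := this
        _ ≤ best s (n + 1) := by rw [best]; exact le_max_left _ _

lemma best12 : best [] 12 = 6 := by decide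

lemma no_seven_apfree (T : Finset ℕ) (hT : ∀ x ∈ T, x ∈ Finset.Icc 1 12)
    (hAP : ThreeAPFreeSet T) : T.card ≤ 6 := by
  have := best_bound 12 [] (by simp) T hT (by simpa using hAP)
  rwa [best12] at this

theorem gracefulChromatic_K7 :
    gracefulChromaticNumber (⊤ : SimpleGraph (Fin 7)) = 13 ∧
      IsGracefulLColoring (⊤ : SimpleGraph (Fin 7)) 13 ![1, 2, 4, 5, 10, 11, 13] := by
  have hcol : IsGracefulLColoring (⊤ : SimpleGraph (Fin 7)) 13 ![1, 2, 4, 5, 10, 11, 13] := by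
    refine ⟨by decide, by decide, by unfold GracefulEdgeProper; decide⟩
  have h13 : 13 ∈ {l | 2 ≤ l ∧ ∃ g : Fin 7 → ℕ, IsGracefulLColoring (⊤ : SimpleGraph (Fin 7)) l g} :=
    ⟨by norm_num, _, hcol⟩
  refine ⟨le_antisymm (Nat.sInf_le h13) ?_, hcol⟩
  apply le_csInf ⟨13, h13⟩
  rintro m ⟨hm2, g, hIcc, hproper, hedge⟩
  by_contra hlt
  push_neg at hlt
  have hm12 : m ≤ 12 := by omega
  set S : Finset ℕ := Finset.image g Finset.univ with hSdef
  have hinj : Function.Injective g := by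
    intro a b hg
    by_contra hne
    exact hproper a b (by simpa [SimpleGraph.top_adj] using hne) hg
  have hScard : S.card = 7 := by
    rw [hSdef, Finset.card_image_of_injective _ hinj, Finset.card_univ, Fintype.card_fin]
  have hSsub : ∀ x ∈ S, x ∈ Finset.Icc 1 12 := by
    intro x hx
    obtain ⟨v, _, rfl⟩ := Finset.mem_image.1 hx
    have := hIcc v
    simp at this ⊢
    omega
  have hAP : ThreeAPFreeSet S := by
    intro a ha b hb c hc hab hbc hac heq
    obtain ⟨x, _, rfl⟩ := Finset.mem_image.1 ha
    obtain ⟨y, _, rfl⟩ := Finset.mem_image.1 hb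
    obtain ⟨z, _, rfl⟩ := Finset.mem_image.1 hc
    have hxy : y ≠ x := fun h => hab (h ▸ rfl)
    have hyz : y ≠ z := fun h => hbc (h ▸ rfl)
    have hxz : x ≠ z := fun h => hac (h ▸ rfl)
    have := hedge y x z (by simpa [SimpleGraph.top_adj] using hxy)
      (by simpa [SimpleGraph.top_adj] using hyz) hxz
    apply this
    simp only [Nat.dist]
    omega
  have := no_seven_apfree S hSsub hAP
  omega
end

section
/- The graceful chromatic number of the complete graph K_8 is 14; a graceful 14-coloring is given by assigning the eight vertices the colors 1, 2, 4, 5, 10, 11, 13, 14. -/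
/-!
In a complete graph every two vertices are adjacent, so a graceful coloring is injective, and
its set of colors contains no three-term progression `a, b, c` (the vertex colored `b` would
see its edges to `a` and `c` colored alike). Hence a graceful `l`-coloring of `K_n` needs
`n ≤ r(l)`, the Roth number of `{1, …, l}`. A finite check gives `r(13) = 7`, and
`{1, 2, 4, 5, 10, 11, 13, 14}` is free of three-term progressions.
-/

open Finset

variable {V : Type*}

theorem gracefulEdgeProper_top_iff {g : V → ℕ} (hg : Function.Injective g) :
    GracefulEdgeProper (⊤ : SimpleGraph V) g ↔ ThreeAPFree (Set.range g) := by
  simp only [GracefulEdgeProper, SimpleGraph.top_adj, Nat.dist]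
  constructor
  · rintro hedge _ ⟨u, rfl⟩ _ ⟨v, rfl⟩ _ ⟨w, rfl⟩ hsum
    by_contra huv
    have hvw : v ≠ w := by rintro rfl; omega
    have huw : u ≠ w := by rintro rfl; omega
    exact hedge v u w (ne_of_apply_ne g huv).symm hvw huw (by omega)
  · intro hfree a b c hab hac hbc hdist
    have hgbc : g b ≠ g c := hg.ne hbc
    exact hg.ne hab (hfree ⟨b, rfl⟩ ⟨a, rfl⟩ ⟨c, rfl⟩ (by omega)).symm

theorem isGracefulLColoring_top_iff {l : ℕ} {g : V → ℕ} :
    IsGracefulLColoring (⊤ : SimpleGraph V) l g ↔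
      (∀ v, g v ∈ Icc 1 l) ∧ Function.Injective g ∧ ThreeAPFree (Set.range g) := by
  have hproper :
      (∀ a b : V, (⊤ : SimpleGraph V).Adj a b → g a ≠ g b) ↔ Function.Injective g :=
    ⟨fun h a b hab => not_imp_not.1 (h a b) hab, fun hg a b hab => hg.ne hab⟩
  rw [IsGracefulLColoring, hproper]
  exact and_congr_right' (and_congr_right gracefulEdgeProper_top_iff)

theorem card_le_rothNumberNat_of_isGracefulLColoring_top [Fintype V] {l : ℕ} {g : V → ℕ}
    (hg : IsGracefulLColoring (⊤ : SimpleGraph V) l g) : Fintype.card V ≤ rothNumberNat l := by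
  obtain ⟨hcolors, hinj, hfree⟩ := isGracefulLColoring_top_iff.1 hg
  have hsub : univ.image g ⊆ Ico 1 (l + 1) := by
    simpa [subset_iff, Nat.lt_succ_iff] using hcolors
  calc Fintype.card V = #(univ.image g) := (card_image_of_injective _ hinj).symm
    _ ≤ addRothNumber (Ico 1 (l + 1)) := by
      refine ThreeAPFree.le_addRothNumber ?_ hsub
      simpa only [coe_image, coe_univ, Set.image_univ] using hfree
    _ = rothNumberNat l := by rw [addRothNumber_Ico, Nat.add_sub_cancel]

set_option maxRecDepth 10000 in
theorem rothNumberNat_thirteen_lt_eight : rothNumberNat 13 < 8 := by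
  have hcheck : ∀ t ∈ powersetCard 8 (range 13), ¬ThreeAPFree (t : Set ℕ) := by
    decide +kernel
  rw [rothNumberNat_def]
  exact addRothNumber_lt_of_forall_not_threeAPFree hcheck

theorem isGracefulLColoring_top_fin_eight :
    IsGracefulLColoring (⊤ : SimpleGraph (Fin 8)) 14 ![1, 2, 4, 5, 10, 11, 13, 14] := by
  rw [isGracefulLColoring_top_iff, ← Set.image_univ, ← coe_univ, ← coe_image]
  decide

theorem fourteen_le_of_isGracefulLColoring_top_fin_eight {l : ℕ} {g : Fin 8 → ℕ}
    (hg : IsGracefulLColoring (⊤ : SimpleGraph (Fin 8)) l g) : 14 ≤ l := by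
  by_contra! hl
  have hcard := card_le_rothNumberNat_of_isGracefulLColoring_top hg
  rw [Fintype.card_fin] at hcard
  exact (hcard.trans (rothNumberNat.mono (by omega))).not_gt rothNumberNat_thirteen_lt_eight

theorem gracefulChromatic_K8 :
    gracefulChromaticNumber (⊤ : SimpleGraph (Fin 8)) = 14 ∧
      IsGracefulLColoring (⊤ : SimpleGraph (Fin 8)) 14 ![1, 2, 4, 5, 10, 11, 13, 14] := by
  have h14 : 14 ∈ {l | 2 ≤ l ∧ ∃ g, IsGracefulLColoring (⊤ : SimpleGraph (Fin 8)) l g} :=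
    ⟨by norm_num, _, isGracefulLColoring_top_fin_eight⟩
  refine ⟨le_antisymm (Nat.sInf_le h14) (le_csInf ⟨14, h14⟩ ?_),
    isGracefulLColoring_top_fin_eight⟩
  rintro l ⟨-, g, hg⟩
  exact fourteen_le_of_isGracefulLColoring_top_fin_eight hg
end

section
/- The graceful chromatic number of the complete graph K_9 is 20; a graceful 20-coloring is given by assigning the nine vertices the colors 1, 2, 6, 7, 9, 14, 15, 18, 20. -/
def ok (x : ℕ) (t : List ℕ) : Bool :=
  t.all fun b => decide ((2 * b - x) ∉ t)

def search : ℕ → ℕ → List ℕ → Bool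
  | 0, _, _ => true
  | _+1, 0, _ => false
  | k+1, n+1, t => (ok (n+1) t && search k n ((n+1) :: t)) || search (k+1) n t

def Good (L : List ℕ) : Prop :=
  ∀ a ∈ L, ∀ b ∈ L, ∀ c ∈ L, a ≠ b → a ≠ c → b ≠ c → b + c ≠ 2 * a

lemma good_perm {L L' : List ℕ} (h : ∀ x, x ∈ L' → x ∈ L) (hG : Good L) : Good L' :=
  fun a ha b hb c hc => hG a (h a ha) b (h b hb) c (h c hc)

lemma main_lemma : ∀ n (s t : List ℕ), s.Nodup →
    (∀ x ∈ s, 1 ≤ x ∧ x ≤ n) → (∀ x ∈ t, n < x) → Good (s ++ t) →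
    search s.length n t = true := by
  intro n
  induction n with
  | zero =>
    intro s t _ hs _ _
    have : s = [] := by
      cases s with
      | nil => rfl
      | cons a l => exact absurd (hs a (by simp)) (by omega)
    subst this
    rfl
  | succ n ih =>
    intro s t hnd hs ht hG
    by_cases hmem : (n+1) ∈ s
    · -- pick n+1
      have hok : ok (n+1) t = true := by
        simp only [ok, List.all_eq_true, decide_eq_true_eq]
        intro b hb hc
        have hbn : n + 1 < b := ht b hb
        have h1 : (n+1) ∈ s ++ t := List.mem_append.2 (Or.inl hmem)
        have h2 : b ∈ s ++ t := List.mem_append.2 (Or.inr hb)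
        have h3 : (2*b - (n+1)) ∈ s ++ t := List.mem_append.2 (Or.inr hc)
        have := hG b h2 (n+1) h1 (2*b - (n+1)) h3 (by omega) (by omega) (by omega)
        omega
      have hlen : s.length = (s.erase (n+1)).length + 1 := by
        rw [List.length_erase_of_mem hmem]
        cases s with
        | nil => simp at hmem
        | cons a l => simp
      rw [hlen]
      have hrec : search (s.erase (n+1)).length n ((n+1) :: t) = true := by
        apply ih (s.erase (n+1)) ((n+1) :: t) (hnd.erase _)
        · intro x hx
          have hx' := (hnd.mem_erase_iff.1 hx)
          have := hs x hx'.2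
          have := hx'.1
          omega
        · intro x hx
          rcases List.mem_cons.1 hx with h | h
          · omega
          · have := ht x h; omega
        · apply good_perm _ hG
          intro x hx
          rcases List.mem_append.1 hx with h | h
          · exact List.mem_append.2 (Or.inl ((hnd.mem_erase_iff.1 h).2))
          · rcases List.mem_cons.1 h with h | h
            · exact List.mem_append.2 (Or.inl (h ▸ hmem))
            · exact List.mem_append.2 (Or.inr h)
      simp only [search, hok, hrec, Bool.true_and, Bool.true_or]
    · -- skip n+1
      have hrec : search s.length n t = true := by
        apply ih s t hnd _ (fun x hx => by have := ht x hx; omega) hG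
        intro x hx
        have := hs x hx
        have : x ≠ n + 1 := fun h => hmem (h ▸ hx)
        omega
      cases hl : s.length with
      | zero => rfl
      | succ k =>
        have : search (k+1) n t = true := hl ▸ hrec
        simp only [search, this, Bool.or_true]

set_option maxHeartbeats 4000000 in
lemma search_false : search 9 19 [] = false := by decide

set_option maxHeartbeats 1000000 in
lemma col20 : IsGracefulLColoring (⊤ : SimpleGraph (Fin 9)) 20 ![1, 2, 6, 7, 9, 14, 15, 18, 20] := by
  unfold IsGracefulLColoring GracefulEdgeProper
  refine ⟨by decide, by decide, by decide⟩

lemma no19 : ∀ l ∈ {l | 2 ≤ l ∧ ∃ g : Fin 9 → ℕ,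
    IsGracefulLColoring (⊤ : SimpleGraph (Fin 9)) l g}, 20 ≤ l := by
  rintro l ⟨-, g, hmem, hcol, hedge⟩
  by_contra hlt
  push_neg at hlt
  have hl19 : l ≤ 19 := by omega
  have hinj : Function.Injective g := by
    intro a b hab
    by_contra hne
    exact hcol a b (by simpa [SimpleGraph.top_adj] using hne) hab
  set s : List ℕ := (List.finRange 9).map g with hsdef
  have hnd : s.Nodup := (List.nodup_finRange 9).map hinj
  have hlen : s.length = 9 := by simp [hsdef]
  have hG : Good (s ++ []) := by
    rw [List.append_nil]
    intro a ha b hb c hc hab hac hbc heq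
    simp only [hsdef, List.mem_map] at ha hb hc
    obtain ⟨u, -, rfl⟩ := ha
    obtain ⟨v, -, rfl⟩ := hb
    obtain ⟨w, -, rfl⟩ := hc
    have huv : u ≠ v := fun h => hab (h ▸ rfl)
    have huw : u ≠ w := fun h => hac (h ▸ rfl)
    have hvw : v ≠ w := fun h => hbc (h ▸ rfl)
    have := hedge u v w (by simpa [SimpleGraph.top_adj] using huv)
      (by simpa [SimpleGraph.top_adj] using huw) hvw
    simp only [Nat.dist] at this
    omega
  have hs : ∀ x ∈ s, 1 ≤ x ∧ x ≤ 19 := by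
    intro x hx
    simp only [hsdef, List.mem_map] at hx
    obtain ⟨u, -, rfl⟩ := hx
    have := hmem u
    rw [Finset.mem_Icc] at this
    omega
  have := main_lemma 19 s [] hnd hs (by simp) hG
  rw [hlen, search_false] at this
  exact absurd this (by simp)

theorem gracefulChromatic_K9 :
    gracefulChromaticNumber (⊤ : SimpleGraph (Fin 9)) = 20 ∧
      IsGracefulLColoring (⊤ : SimpleGraph (Fin 9)) 20 ![1, 2, 6, 7, 9, 14, 15, 18, 20] := by
  refine ⟨?_, col20⟩
  have h20 : 20 ∈ {l | 2 ≤ l ∧ ∃ g : Fin 9 → ℕ,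
      IsGracefulLColoring (⊤ : SimpleGraph (Fin 9)) l g} := ⟨by norm_num, _, col20⟩
  exact le_antisymm (Nat.sInf_le h20) (le_csInf ⟨20, h20⟩ no19)
end

section
/- The graceful chromatic number of the complete graph K_10 is 24; a graceful 24-coloring is given by assigning the ten vertices the colors 1, 2, 5, 7, 11, 16, 18, 19, 23, 24. -/
/-- Auxiliary: `x` can be added to the partial selection `c` without creating a 3-AP
in which `x` is the largest element. -/
def goodB (c : List ℕ) (x : ℕ) : Bool := c.all fun b => c.all fun a => decide (a + x ≠ 2*b)

/-- Backtracking search (with fuel): can `need` further elements be chosen from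
`{x, …, 23}` so that, together with `c`, they form a 3-AP-free set? -/
def searchF : ℕ → ℕ → ℕ → List ℕ → Bool
  | _, _, 0, _ => true
  | 0, _, _+1, _ => false
  | fuel+1, x, need+1, c =>
    if 24 - x < need + 1 then false
    else ((goodB c x && searchF fuel (x+1) need (x :: c)) || searchF fuel (x+1) (need+1) c)

lemma searchF_complete : ∀ fuel x need (c : List ℕ) (S : Finset ℕ),
    24 - x ≤ fuel →
    S.card = need →
    (∀ s ∈ S, x ≤ s ∧ s ≤ 23) →
    (∀ a ∈ c, a < x) →
    (∀ a b y : ℕ, (a ∈ c ∨ a ∈ S) → (b ∈ c ∨ b ∈ S) → (y ∈ c ∨ y ∈ S) →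
      a ≠ y → a + y ≠ 2 * b) →
    searchF fuel x need c = true := by
  intro fuel
  induction fuel with
  | zero =>
    intro x need c S hk hcard hS _ _
    match need with
    | 0 => rw [searchF]
    | need+1 =>
      exfalso
      have hpos : 0 < S.card := by omega
      obtain ⟨s, hs⟩ := Finset.card_pos.mp hpos
      have := hS s hs
      omega
  | succ k ih =>
    intro x need c S hk hcard hS hc hap
    match need with
    | 0 => rw [searchF]
    | need+1 =>
      have hsub : S ⊆ Finset.Icc x 23 := fun s hs =>
        Finset.mem_Icc.mpr ⟨(hS s hs).1, (hS s hs).2⟩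
      have hcardle := Finset.card_le_card hsub
      rw [Nat.card_Icc] at hcardle
      have hx : ¬ (24 - x < need + 1) := by omega
      have hx24 : x ≤ 23 := by omega
      rw [searchF, if_neg hx]
      by_cases hxS : x ∈ S
      · have hgood : goodB c x = true := by
          simp only [goodB, List.all_eq_true, decide_eq_true_eq]
          intro b hb a ha
          exact hap a b x (Or.inl ha) (Or.inl hb) (Or.inr hxS)
            (by have := hc a ha; omega)
        have hrec : searchF k (x+1) need (x :: c) = true := by
          refine ih (x+1) need (x :: c) (S.erase x) (by omega)
            (by rw [Finset.card_erase_of_mem hxS, hcard]; omega) ?_ ?_ ?_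
          · intro s hsmem
            have h1 := Finset.ne_of_mem_erase hsmem
            have h2 := hS s (Finset.mem_of_mem_erase hsmem)
            omega
          · intro a ha
            rcases List.mem_cons.mp ha with h | h
            · omega
            · have := hc a h; omega
          · intro a b y ha hb hy
            have conv : ∀ z : ℕ, (z ∈ x :: c ∨ z ∈ S.erase x) → (z ∈ c ∨ z ∈ S) := by
              intro z hz
              rcases hz with hz | hz
              · rcases List.mem_cons.mp hz with h | h
                · exact Or.inr (h ▸ hxS)
                · exact Or.inl h
              · exact Or.inr (Finset.mem_of_mem_erase hz)
            exact hap a b y (conv a ha) (conv b hb) (conv y hy)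
        simp [hrec, hgood]
      · have hrec : searchF k (x+1) (need+1) c = true := by
          refine ih (x+1) (need+1) c S (by omega) hcard ?_
            (fun a ha => by have := hc a ha; omega) hap
          intro s hsmem
          have h1 := hS s hsmem
          have h2 : s ≠ x := fun h => hxS (h ▸ hsmem)
          omega
        simp [hrec]

set_option maxHeartbeats 16000000 in
set_option maxRecDepth 100000 in
lemma searchF_false : searchF 23 1 10 [] = false := by decide

theorem gracefulChromatic_K10 :
    gracefulChromaticNumber (⊤ : SimpleGraph (Fin 10)) = 24 ∧
      IsGracefulLColoring (⊤ : SimpleGraph (Fin 10)) 24 ![1, 2, 5, 7, 11, 16, 18, 19, 23, 24] := by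
  have hcol : IsGracefulLColoring (⊤ : SimpleGraph (Fin 10)) 24
      ![1, 2, 5, 7, 11, 16, 18, 19, 23, 24] := by
    refine ⟨by decide, by decide, by unfold GracefulEdgeProper; decide⟩
  refine ⟨?_, hcol⟩
  have hmem : 24 ∈ {l | 2 ≤ l ∧ ∃ g : Fin 10 → ℕ,
      IsGracefulLColoring (⊤ : SimpleGraph (Fin 10)) l g} :=
    ⟨by norm_num, _, hcol⟩
  refine le_antisymm (Nat.sInf_le hmem) (le_csInf ⟨24, hmem⟩ ?_)
  rintro l ⟨hl2, g, hg1, hg2, hg3⟩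
  by_contra hlt
  push_neg at hlt
  have hl23 : l ≤ 23 := by omega
  -- g is injective
  have hinj : Function.Injective g := by
    intro u v huv
    by_contra hne
    exact hg2 u v (by simpa using hne) huv
  set S : Finset ℕ := Finset.image g Finset.univ with hSdef
  have hScard : S.card = 10 := by
    rw [hSdef, Finset.card_image_of_injective _ hinj, Finset.card_univ, Fintype.card_fin]
  have hSrange : ∀ s ∈ S, 1 ≤ s ∧ s ≤ 23 := by
    intro s hsmem
    obtain ⟨v, _, rfl⟩ := Finset.mem_image.mp hsmem
    have := Finset.mem_Icc.mp (hg1 v)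
    omega
  have hAP : ∀ a b y : ℕ, (a ∈ ([] : List ℕ) ∨ a ∈ S) → (b ∈ ([] : List ℕ) ∨ b ∈ S) →
      (y ∈ ([] : List ℕ) ∨ y ∈ S) → a ≠ y → a + y ≠ 2 * b := by
    rintro a b y (ha | ha) (hb | hb) (hy | hy) hay heq <;>
      try simp at ha hb hy
    obtain ⟨u, _, rfl⟩ := Finset.mem_image.mp ha
    obtain ⟨v, _, rfl⟩ := Finset.mem_image.mp hb
    obtain ⟨w, _, rfl⟩ := Finset.mem_image.mp hy
    have hab : g u ≠ g v := by intro h; omega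
    have hby : g v ≠ g w := by intro h; omega
    have hvu : v ≠ u := fun h => hab (h ▸ rfl)
    have hvw : v ≠ w := fun h => hby (h.symm ▸ rfl)
    have huw : u ≠ w := fun h => hay (h ▸ rfl)
    have hedge := hg3 v u w (by simpa using hvu) (by simpa using hvw) huw
    simp only [Nat.dist] at hedge
    omega
  have := searchF_complete 23 1 10 [] S (by omega) hScard
    (fun s hs => ⟨(hSrange s hs).1, (hSrange s hs).2⟩)
    (by simp) hAP
  rw [searchF_false] at this
  exact absurd this (by simp)
end

section
/- The graceful chromatic number of the complete graph K_11 is 26; a graceful 26-coloring is given by assigning the eleven vertices the colors 1, 2, 5, 7, 11, 16, 18, 19, 23, 24, 26. -/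
/-!
For a complete graph, a graceful coloring is just an injective coloring whose set of colors
contains no three-term arithmetic progression: if `g b, g a, g c` were an AP, the edges `ab`
and `ac` at its middle vertex `a` would get the same induced color. Translation preserves being
3-AP-free, so a graceful coloring of `K₁₁` with colors at most `25` would give an 11-element
3-AP-free subset of `[1, 25]` containing `1`, and an exhaustive depth-first search shows there
is none. The colors `1, 2, 5, 7, 11, 16, 18, 19, 23, 24, 26` form a 3-AP-free set.
-/

open Finset

theorem gracefulChromaticNumber_eq {V : Type*} {G : SimpleGraph V} {l : ℕ} {g : V → ℕ}
    (hl : 2 ≤ l) (hg : IsGracefulLColoring G l g)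
    (hmin : ∀ l' (g' : V → ℕ), IsGracefulLColoring G l' g' → l ≤ l') :
    gracefulChromaticNumber G = l :=
  le_antisymm (Nat.sInf_le ⟨hl, g, hg⟩)
    (le_csInf ⟨l, hl, g, hg⟩ fun _ ⟨_, g', hg'⟩ => hmin _ g' hg')

namespace IsGracefulLColoring

variable {V : Type*} {l : ℕ} {g : V → ℕ}

theorem injective_of_top (hg : IsGracefulLColoring ⊤ l g) : Function.Injective g := by
  intro a b hab
  by_contra hne
  exact hg.2.1 a b hne hab

theorem threeAPFreeSet_image_of_top [Fintype V] (hg : IsGracefulLColoring ⊤ l g) :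
    ThreeAPFreeSet (univ.image g) := by
  simp only [ThreeAPFreeSet, mem_image, mem_univ, true_and]
  rintro _ ⟨u, rfl⟩ _ ⟨v, rfl⟩ _ ⟨w, rfl⟩ huv hvw huw hAP
  refine hg.2.2 v u w (ne_of_apply_ne g huv).symm (ne_of_apply_ne g hvw) (ne_of_apply_ne g huw) ?_
  simp only [Nat.dist]
  omega

end IsGracefulLColoring

theorem ThreeAPFreeSet.image_sub {S : Finset ℕ} {d : ℕ} (hS : ThreeAPFreeSet S)
    (hd : ∀ x ∈ S, d ≤ x) : ThreeAPFreeSet (S.image (· - d)) := by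
  simp only [ThreeAPFreeSet, mem_image]
  rintro _ ⟨a, ha, rfl⟩ _ ⟨b, hb, rfl⟩ _ ⟨c, hc, rfl⟩ hab hbc hac hAP
  have := hd a ha
  have := hd b hb
  have := hd c hc
  exact hS a ha b hb c hc (by omega) (by omega) (by omega) (by omega)

def canAddMax (c : ℕ) (l : List ℕ) : Bool :=
  l.all fun b => l.all fun a => a + c != 2 * b

/-- Whether some `k` of the numbers `c, c + 1, …, c + n - 1` can be added to the elements of `l`
(all smaller than `c`) without creating a 3-AP. Candidates are added in increasing order, so each
new one can only be the largest term of a new progression, which is what `canAddMax` tests. -/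
def existsAPFreeExtension : ℕ → ℕ → ℕ → List ℕ → Bool
  | 0, _, _, _ => true
  | _ + 1, 0, _, _ => false
  | k + 1, n + 1, c, l =>
      k ≤ n && ((canAddMax c l && existsAPFreeExtension k n (c + 1) (c :: l)) ||
        existsAPFreeExtension (k + 1) n (c + 1) l)

theorem canAddMax_of_threeAPFreeSet {S : Finset ℕ} {c : ℕ} {l : List ℕ}
    (hS : ThreeAPFreeSet S) (hc : c ∈ S) (hl : ∀ a ∈ l, a ∈ S ∧ a < c) :
    canAddMax c l = true := by
  simp only [canAddMax, List.all_eq_true, bne_iff_ne]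
  intro b hb a ha hAP
  have := (hl a ha).2
  have := (hl b hb).2
  exact hS a (hl a ha).1 b (hl b hb).1 c hc (by omega) (by omega) (by omega) (by omega)

theorem existsAPFreeExtension_of_threeAPFreeSet {k n c : ℕ} {l : List ℕ} {R : Finset ℕ}
    (hR : R ⊆ Ico c (c + n)) (hk : #R = k) (hl : ∀ a ∈ l, a < c)
    (hAP : ThreeAPFreeSet (R ∪ l.toFinset)) : existsAPFreeExtension k n c l = true := by
  induction n generalizing k c l R with
  | zero =>
    obtain rfl : R = ∅ := by simpa using hR
    simp [← hk, existsAPFreeExtension]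
  | succ n ih =>
    obtain _ | k := k
    · simp [existsAPFreeExtension]
    have hkn : k ≤ n := by
      have := card_le_card hR
      simp only [Nat.card_Ico] at this
      omega
    simp only [existsAPFreeExtension, hkn, decide_true, Bool.true_and, Bool.or_eq_true,
      Bool.and_eq_true]
    by_cases hc : c ∈ R
    · left
      refine ⟨canAddMax_of_threeAPFreeSet hAP (by simp [hc])
        fun a ha => ⟨by simp [ha], hl a ha⟩, ih (R := R.erase c) ?_ (by simp [hc, hk]) ?_ ?_⟩
      · intro x hx
        have := hR (mem_of_mem_erase hx)
        simp only [mem_Ico, mem_erase] at this hx ⊢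
        omega
      · simpa using fun a ha => (hl a ha).trans (Nat.lt_succ_self c)
      · convert hAP using 1
        ext x
        by_cases hx : x = c <;> simp [hx, hc]
    · right
      refine ih ?_ hk (fun a ha => (hl a ha).trans (Nat.lt_succ_self c)) hAP
      intro x hx
      have := hR hx
      simp only [mem_Ico] at this ⊢
      have : x ≠ c := fun h => hc (h ▸ hx)
      omega

theorem existsAPFreeExtension_ten_twentyFour : existsAPFreeExtension 10 24 2 [1] = false := by
  decide +kernel

theorem not_threeAPFreeSet_of_one_mem {T : Finset ℕ} (hT : T ⊆ Icc 1 25) (h1 : 1 ∈ T)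
    (hcard : #T = 11) : ¬ ThreeAPFreeSet T := by
  intro hAP
  have hR : T.erase 1 ⊆ Ico 2 (2 + 24) := by
    intro x hx
    have := hT (mem_of_mem_erase hx)
    simp only [mem_Icc, mem_Ico, mem_erase] at this hx ⊢
    omega
  have := existsAPFreeExtension_of_threeAPFreeSet (k := 10) (l := [1]) hR
    (by simp [h1, hcard]) (by simp) (by simpa [h1] using hAP)
  simp [existsAPFreeExtension_ten_twentyFour] at this

theorem ThreeAPFreeSet.exists_one_mem {S : Finset ℕ} {N : ℕ} (hAP : ThreeAPFreeSet S)
    (hS : S ⊆ Icc 1 N) (hne : S.Nonempty) :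
    ∃ T ⊆ Icc 1 N, 1 ∈ T ∧ #T = #S ∧ ThreeAPFreeSet T := by
  set d := S.min' hne - 1
  have hd : ∀ x ∈ S, d + 1 ≤ x := fun x hx => by
    have := S.min'_le x hx
    have := (mem_Icc.mp (hS (S.min'_mem hne))).1
    omega
  refine ⟨S.image (· - d), ?_, ?_, ?_,
    hAP.image_sub fun x hx => (Nat.le_succ d).trans (hd x hx)⟩
  · intro y hy
    obtain ⟨x, hx, rfl⟩ := mem_image.mp hy
    have := hd x hx
    have := mem_Icc.mp (hS hx)
    simp only [mem_Icc]
    omega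
  · have := hd _ (S.min'_mem hne)
    exact mem_image.mpr ⟨S.min' hne, S.min'_mem hne, by omega⟩
  · refine card_image_of_injOn fun x hx y hy hxy => ?_
    have := hd x hx
    have := hd y hy
    omega

theorem not_threeAPFreeSet_of_subset_Icc {S : Finset ℕ} (hS : S ⊆ Icc 1 25) (hcard : #S = 11) :
    ¬ ThreeAPFreeSet S := by
  intro hAP
  obtain ⟨T, hT, h1, hTcard, hTAP⟩ := hAP.exists_one_mem hS (card_pos.mp (by omega))
  exact not_threeAPFreeSet_of_one_mem hT h1 (hTcard.trans hcard) hTAP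

theorem IsGracefulLColoring.twentySix_le_of_top {V : Type*} [Fintype V] {l : ℕ} {g : V → ℕ}
    (hV : Fintype.card V = 11) (hg : IsGracefulLColoring ⊤ l g) : 26 ≤ l := by
  by_contra! hl
  refine not_threeAPFreeSet_of_subset_Icc (S := univ.image g) ?_ ?_
    hg.threeAPFreeSet_image_of_top
  · intro x hx
    obtain ⟨v, -, rfl⟩ := mem_image.mp hx
    have := mem_Icc.mp (hg.1 v)
    simp only [mem_Icc]
    omega
  · rw [card_image_of_injective _ hg.injective_of_top, card_univ, hV]

theorem gracefulChromatic_K11 :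
    gracefulChromaticNumber (⊤ : SimpleGraph (Fin 11)) = 26 ∧
      IsGracefulLColoring (⊤ : SimpleGraph (Fin 11)) 26 ![1, 2, 5, 7, 11, 16, 18, 19, 23, 24, 26] := by
  have hcol : IsGracefulLColoring (⊤ : SimpleGraph (Fin 11)) 26
      ![1, 2, 5, 7, 11, 16, 18, 19, 23, 24, 26] := by
    unfold IsGracefulLColoring GracefulEdgeProper
    decide +kernel
  exact ⟨gracefulChromaticNumber_eq (by norm_num) hcol
    fun _ _ hg => hg.twentySix_le_of_top (Fintype.card_fin 11), hcol⟩
end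

section
/- The graceful chromatic number of the complete graph K_13 is 32; a graceful 32-coloring is given by assigning the thirteen vertices the colors 1, 2, 4, 8, 9, 11, 19, 22, 23, 26, 28, 31, 32. -/
/-!
In a complete graph all vertices are pairwise adjacent, so a graceful colouring is injective and
its colour set contains no 3-term progression `a, b, c`: the edges from the vertex coloured `b` to
those coloured `a` and `c` would get the same colour `b - a = c - b`. Hence a graceful
`l`-colouring of `K_13` needs `13 ≤ r₃(l)`, the Roth number of `[1, l]`. The colouring given is
graceful, and `r₃(31) ≤ 12`: translating a progression-free set so that its minimum is `0`, an
exhaustive search with pruning rules out 12 further elements in `[1, 31)`.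
-/

open Finset

section Graceful

variable {V : Type*} {g : V → ℕ}

lemma injective_of_properColoring_top
    (hg : ∀ a b : V, (⊤ : SimpleGraph V).Adj a b → g a ≠ g b) : Function.Injective g :=
  fun a b hab => by_contra fun hne => hg a b hne hab

lemma GracefulEdgeProper.threeAPFree_range (hg : GracefulEdgeProper (⊤ : SimpleGraph V) g) :
    ThreeAPFree (Set.range g) := by
  rintro _ ⟨a, rfl⟩ _ ⟨b, rfl⟩ _ ⟨c, rfl⟩ habc
  by_contra hab
  have hba : b ≠ a := fun h => hab (h ▸ rfl)
  have hbc : b ≠ c := by rintro rfl; exact hab (by omega)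
  have hac : a ≠ c := by rintro rfl; exact hab (by omega)
  exact hg b a c hba hbc hac (by unfold Nat.dist; omega)

lemma IsGracefulLColoring.card_le_rothNumberNat [Fintype V] {l : ℕ}
    (hg : IsGracefulLColoring (⊤ : SimpleGraph V) l g) : Fintype.card V ≤ rothNumberNat l := by
  obtain ⟨hcolors, hproper, hedges⟩ := hg
  have hinj := injective_of_properColoring_top hproper
  have hAP : ThreeAPFree ((univ.image g : Finset ℕ) : Set ℕ) := by
    rw [coe_image, coe_univ, Set.image_univ]
    exact hedges.threeAPFree_range
  have hsub : univ.image g ⊆ Ico 1 (l + 1) := by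
    intro x hx
    obtain ⟨v, -, rfl⟩ := mem_image.mp hx
    simpa [Nat.lt_succ_iff] using hcolors v
  calc Fintype.card V = #(univ.image g) := (card_image_of_injective _ hinj).symm
    _ ≤ addRothNumber (Ico 1 (l + 1)) := hAP.le_addRothNumber hsub
    _ = rothNumberNat l := by rw [addRothNumber_Ico, Nat.add_sub_cancel]

end Graceful

section Search

/-- The bits `2c - a`, `a ∈ s`: the values completing a progression `a, c, 2c - a`. -/
def apCompletionMask (s : List ℕ) (c : ℕ) : ℕ := s.foldr (fun a m => m ||| 1 <<< (2 * c - a)) 0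

/-- Depth-first search: can `k` further elements of `[c, c + f)` be added to the elements `s`
chosen so far (all below `c`) without creating a 3-term progression? Bit `i` of `mask` marks
`i` as the top of a progression whose other two terms lie in `s`. -/
def canExtendAPFree : List ℕ → ℕ → ℕ → ℕ → ℕ → Bool
  | _, _, 0, _, _ => true
  | _, _, _ + 1, _, 0 => false
  | s, mask, k + 1, c, f + 1 =>
      (!mask.testBit c && decide (k ≤ f) &&
          canExtendAPFree (c :: s) (mask ||| apCompletionMask s c) k (c + 1) f) ||
        (decide (k + 1 ≤ f) && canExtendAPFree s mask (k + 1) (c + 1) f)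

def APMaskSound (s : List ℕ) (mask : ℕ) : Prop :=
  ∀ i, mask.testBit i = true → ∃ a ∈ s, ∃ b ∈ s, a < b ∧ i + a = 2 * b

lemma exists_of_testBit_apCompletionMask {s : List ℕ} {c i : ℕ}
    (h : (apCompletionMask s c).testBit i = true) : ∃ a ∈ s, i = 2 * c - a := by
  induction s with
  | nil => simp [apCompletionMask] at h
  | cons a t ih =>
    change (apCompletionMask t c ||| 1 <<< (2 * c - a)).testBit i = true at h
    rw [Nat.testBit_or, Bool.or_eq_true] at h
    rcases h with h | h
    · obtain ⟨x, hx, rfl⟩ := ih h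
      exact ⟨x, List.mem_cons_of_mem _ hx, rfl⟩
    · rw [Nat.shiftLeft_eq, one_mul, Nat.testBit_two_pow, decide_eq_true_iff] at h
      exact ⟨a, List.mem_cons_self, h.symm⟩

lemma APMaskSound.extend {s : List ℕ} {mask c : ℕ} (hmask : APMaskSound s mask)
    (hs : ∀ a ∈ s, a < c) : APMaskSound (c :: s) (mask ||| apCompletionMask s c) := by
  intro i hi
  rw [Nat.testBit_or, Bool.or_eq_true] at hi
  rcases hi with hi | hi
  · obtain ⟨a, ha, b, hb, hab, h⟩ := hmask i hi
    exact ⟨a, List.mem_cons_of_mem _ ha, b, List.mem_cons_of_mem _ hb, hab, h⟩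
  · obtain ⟨a, ha, rfl⟩ := exists_of_testBit_apCompletionMask hi
    have := hs a ha
    exact ⟨a, List.mem_cons_of_mem _ ha, c, List.mem_cons_self, this, by omega⟩

lemma inter_Ico_add_succ (S : Finset ℕ) (c f : ℕ) :
    S ∩ Ico c (c + (f + 1)) = if c ∈ S then insert c (S ∩ Ico (c + 1) (c + 1 + f))
      else S ∩ Ico (c + 1) (c + 1 + f) := by
  have hIco : Ico c (c + (f + 1)) = insert c (Ico (c + 1) (c + 1 + f)) := by
    ext x; simp only [mem_Ico, mem_insert]; omega
  split_ifs with hc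
  · rw [hIco, inter_insert_of_mem hc]
  · rw [hIco, inter_insert_of_notMem hc]

theorem canExtendAPFree_of_threeAPFree {S : Finset ℕ} (hS : ThreeAPFree (S : Set ℕ)) (f : ℕ) :
    ∀ {s : List ℕ} {mask k c : ℕ}, (∀ a ∈ s, a ∈ S ∧ a < c) → APMaskSound s mask →
      k ≤ #(S ∩ Ico c (c + f)) → canExtendAPFree s mask k c f = true := by
  induction f with
  | zero =>
    intro s mask k c _ _ hk
    simp only [add_zero, Ico_self, inter_empty, card_empty, nonpos_iff_eq_zero] at hk
    subst hk
    rfl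
  | succ f ih =>
    intro s mask k c hs hmask hk
    obtain _ | k := k
    · rfl
    have hbound : #(S ∩ Ico (c + 1) (c + 1 + f)) ≤ f :=
      (card_le_card inter_subset_right).trans (by simp)
    rw [inter_Ico_add_succ] at hk
    simp only [canExtendAPFree, Bool.or_eq_true, Bool.and_eq_true, decide_eq_true_iff,
      Bool.not_eq_true']
    split_ifs at hk with hc
    · rw [card_insert_of_notMem (by simp)] at hk
      refine Or.inl ⟨⟨?_, by omega⟩,
        ih ?_ (hmask.extend fun a ha => (hs a ha).2) (by omega)⟩
      · by_contra hbit
        obtain ⟨a, ha, b, hb, hab, h⟩ := hmask c (by simpa using hbit)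
        exact hab.ne (hS (hs a ha).1 (hs b hb).1 hc (by omega))
      · intro a ha
        rcases List.mem_cons.mp ha with rfl | ha
        · exact ⟨hc, by omega⟩
        · exact ⟨(hs a ha).1, by have := (hs a ha).2; omega⟩
    · exact Or.inr ⟨by omega, ih (fun a ha => ⟨(hs a ha).1, by have := (hs a ha).2; omega⟩)
        hmask hk⟩

lemma canExtendAPFree_singleton_zero : canExtendAPFree [0] 0 12 1 30 = false := by decide +kernel

end Search

lemma ThreeAPFree.image_tsub {S : Finset ℕ} (hS : ThreeAPFree (S : Set ℕ)) {m : ℕ}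
    (hm : ∀ x ∈ S, m ≤ x) : ThreeAPFree ((S.image (· - m) : Finset ℕ) : Set ℕ) := by
  simp only [coe_image]
  rintro _ ⟨a, ha, rfl⟩ _ ⟨b, hb, rfl⟩ _ ⟨c, hc, rfl⟩ h
  have := hm a ha; have := hm b hb; have := hm c hc
  beta_reduce at h ⊢
  have := hS ha hb hc (by omega)
  omega

theorem rothNumberNat_thirtyOne_le : rothNumberNat 31 ≤ 12 := by
  obtain ⟨S, hSsub, hcard, hS⟩ := rothNumberNat_spec 31
  by_contra! h
  have hne : S.Nonempty := card_pos.mp (by omega)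
  set m := S.min' hne
  have hm : ∀ x ∈ S, m ≤ x := fun x hx => S.min'_le x hx
  set T := S.image (· - m)
  have hT0 : 0 ∈ T := mem_image.mpr ⟨m, S.min'_mem hne, Nat.sub_self m⟩
  have hTcard : #T = #S := card_image_of_injOn fun a ha b hb hab => by
    have := hm a ha; have := hm b hb; omega
  have hTsub : T ⊆ range 31 := by
    intro x hx
    obtain ⟨a, ha, rfl⟩ := mem_image.mp hx
    have := mem_range.mp (hSsub ha); simp only [mem_range]; omega
  have hrest : T ∩ Ico 1 (1 + 30) = T.erase 0 := by
    ext x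
    by_cases hx : x ∈ T
    · have := mem_range.mp (hTsub hx)
      simp only [mem_inter, mem_Ico, mem_erase, hx, and_true, true_and]
      omega
    · simp [hx]
  have hsearch := canExtendAPFree_of_threeAPFree (hS.image_tsub hm) 30
    (s := [0]) (mask := 0) (k := 12)
    (fun a ha => by rw [List.mem_singleton.mp ha]; exact ⟨hT0, one_pos⟩)
    (fun i hi => by simp at hi)
    (by rw [hrest, card_erase_of_mem hT0]; omega)
  rw [canExtendAPFree_singleton_zero] at hsearch
  exact Bool.false_ne_true hsearch

theorem gracefulChromatic_K13 :
    gracefulChromaticNumber (⊤ : SimpleGraph (Fin 13)) = 32 ∧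
      IsGracefulLColoring (⊤ : SimpleGraph (Fin 13)) 32 ![1, 2, 4, 8, 9, 11, 19, 22, 23, 26, 28, 31, 32] := by
  have hcol : IsGracefulLColoring (⊤ : SimpleGraph (Fin 13)) 32
      ![1, 2, 4, 8, 9, 11, 19, 22, 23, 26, 28, 31, 32] := by
    unfold IsGracefulLColoring GracefulEdgeProper
    decide
  refine ⟨le_antisymm (Nat.sInf_le ⟨by norm_num, _, hcol⟩)
    (le_csInf ⟨32, by norm_num, _, hcol⟩ ?_), hcol⟩
  rintro l ⟨-, g, hg⟩
  by_contra! hl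
  have h13 : 13 ≤ rothNumberNat l := by simpa using hg.card_le_rothNumberNat
  have hmono : rothNumberNat l ≤ rothNumberNat 31 := rothNumberNat.monotone (by omega)
  have := rothNumberNat_thirtyOne_le
  omega
end

section
/- For every n with 2 ≤ n, any two distinct vertices of the complete graph K_n receive distinct colors under a graceful coloring, and consequently for every n ≥ 3 the set of vertex colors of a graceful coloring of K_n contains no three distinct elements a, b, c with b - a = c - b; in particular, the 15-element set {1, 2, 4, 5, 10, 11, 13, 14, 28, 29, 31, 32, 37, 38, 40} ⊆ {1, ..., 40} is 3-AP-free and hence the graceful chromatic number of K_15 is at most 40. -/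
lemma dist_eq_of_ap {a b c : ℕ} (h : (b : ℤ) - a = (c : ℤ) - b) :
    Nat.dist b a = Nat.dist b c := by
  simp only [Nat.dist]; omega

theorem graceful_injective_threeAPFree_and_K15_bound :
    (∀ n : ℕ, 2 ≤ n → ∀ g : Fin n → ℕ,
      IsGracefulColoring (⊤ : SimpleGraph (Fin n)) g → Function.Injective g) ∧
    (∀ n : ℕ, 3 ≤ n → ∀ g : Fin n → ℕ,
      IsGracefulColoring (⊤ : SimpleGraph (Fin n)) g →
        ThreeAPFreeSet (Finset.univ.image g)) ∧
    (({1, 2, 4, 5, 10, 11, 13, 14, 28, 29, 31, 32, 37, 38, 40} : Finset ℕ) ⊆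
        Finset.Icc 1 40 ∧
      ({1, 2, 4, 5, 10, 11, 13, 14, 28, 29, 31, 32, 37, 38, 40} : Finset ℕ).card = 15 ∧
      ThreeAPFreeSet {1, 2, 4, 5, 10, 11, 13, 14, 28, 29, 31, 32, 37, 38, 40} ∧
      gracefulChromaticNumber (⊤ : SimpleGraph (Fin 15)) ≤ 40) := by
  refine ⟨?_, ?_, ?_, ?_, ?_, ?_⟩
  · intro n _ g hg u v huv
    by_contra hne
    exact hg.2.1 u v (by simpa using hne) huv
  · intro n _ g hg a ha b hb c hc hab hbc hac hap
    simp only [Finset.mem_image, Finset.mem_univ, true_and] at ha hb hc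
    obtain ⟨u, rfl⟩ := ha
    obtain ⟨v, rfl⟩ := hb
    obtain ⟨w, rfl⟩ := hc
    have hvu : v ≠ u := fun h => hab (by rw [h])
    have hvw : v ≠ w := fun h => hbc (by rw [h])
    have huw : u ≠ w := fun h => hac (by rw [h])
    exact hg.2.2 v u w (by simpa using hvu) (by simpa using hvw) huw
      (dist_eq_of_ap hap)
  · decide
  · decide
  · unfold ThreeAPFreeSet; decide
  · apply Nat.sInf_le
    refine ⟨by norm_num, ![1, 2, 4, 5, 10, 11, 13, 14, 28, 29, 31, 32, 37, 38, 40],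
      ?_, ?_, ?_⟩
    · decide
    · intro a b hab
      have : a ≠ b := by simpa using hab
      revert this; revert a b; decide
    · intro a b c hab hac hbc
      have h1 : a ≠ b := by simpa using hab
      have h2 : a ≠ c := by simpa using hac
      revert hbc; revert h1 h2; revert a b c; decide
end
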